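/- arXiv:2508.05601 — 10 statements merged into one kernel-verified Lean document; each statement's English description precedes it below -/
import Mathlib

section
/- Let S and T be rainbow independent sets in a coloured matroid (a matroid whose ground set elements are each assigned a colour; a set is rainbow if its elements have pairwise distinct colours). Then there exists a rainbow independent set S* with S ⊆ S* ⊆ S ∪ T and |T \ S*| ≤ 2·|S \ T|. -/
/-!
Extend `S` to a basis `B` of `S ∪ T` and discard from `B \ S` every element whose colour already
occurs in `S`. What is left is rainbow, since `S` and `T` are. An element of `T` is lost in one of
two ways: it is not in `B`, and by basis exchange there are at most `|B \ T| ≤ |S \ T|` of those;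
or it is discarded, and then its colour occurs in `S \ T` (were it the colour of an element of
`S ∩ T`, injectivity on `T` would put the element itself in `S`), so there are at most `|S \ T|`
of those as well.
-/

open Set

namespace Matroid

variable {α : Type*} {M : Matroid α} {I B X : Set α}

theorem IsBasis.encard_sdiff_comm {B₁ B₂ : Set α} (hB₁ : M.IsBasis B₁ X) (hB₂ : M.IsBasis B₂ X) :
    (B₁ \ B₂).encard = (B₂ \ B₁).encard :=
  hB₁.isBase_restrict.encard_sdiff_comm hB₂.isBase_restrict

theorem Indep.encard_sdiff_le_of_isBasis (hI : M.Indep I) (hIX : I ⊆ X) (hB : M.IsBasis B X) :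
    (I \ B).encard ≤ (B \ I).encard := by
  obtain ⟨B', hB', hIB'⟩ := hI.subset_isBasis_of_subset hIX hB.subset_ground
  calc (I \ B).encard ≤ (B' \ B).encard := encard_le_encard (sdiff_subset_sdiff_left hIB')
    _ = (B \ B').encard := hB'.encard_sdiff_comm hB
    _ ≤ (B \ I).encard := encard_le_encard (sdiff_subset_sdiff_right hIB')

end Matroid

namespace Set

variable {α κ : Type*} {c : α → κ} {S T B : Set α}

theorem InjOn.union_sdiff_preimage_image (hS : InjOn c S) (hT : InjOn c T) :
    InjOn c (S ∪ (T \ c ⁻¹' (c '' S))) := by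
  rintro x (hxS | ⟨hxT, hxS⟩) y (hyS | ⟨hyT, hyS⟩) hxy
  · exact hS hxS hyS hxy
  · exact absurd ⟨x, hxS, hxy⟩ hyS
  · exact absurd ⟨y, hyS, hxy.symm⟩ hxS
  · exact hT hxT hyT hxy

theorem sdiff_preimage_image_subset_of_subset_union (hB : B ⊆ S ∪ T) :
    B \ c ⁻¹' (c '' S) ⊆ T \ c ⁻¹' (c '' S) :=
  fun x ⟨hxB, hx⟩ => ⟨(hB hxB).resolve_left fun hxS => hx ⟨x, hxS, rfl⟩, hx⟩

theorem encard_inter_preimage_image_sdiff_le (hT : InjOn c T) :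
    ((T ∩ c ⁻¹' (c '' S)) \ S).encard ≤ (S \ T).encard := by
  have hcolour : c '' ((T ∩ c ⁻¹' (c '' S)) \ S) ⊆ c '' (S \ T) := by
    rintro _ ⟨x, ⟨⟨hxT, s, hsS, hsx⟩, hxS⟩, rfl⟩
    refine ⟨s, ⟨hsS, fun hsT => hxS ?_⟩, hsx⟩
    rwa [← hT hsT hxT hsx]
  calc ((T ∩ c ⁻¹' (c '' S)) \ S).encard
      = (c '' ((T ∩ c ⁻¹' (c '' S)) \ S)).encard :=
        ((hT.mono inter_subset_left).mono sdiff_subset).encard_image.symm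
    _ ≤ (c '' (S \ T)).encard := encard_le_encard hcolour
    _ ≤ (S \ T).encard := encard_image_le c _

theorem sdiff_union_sdiff_preimage_image_subset :
    T \ (S ∪ (B \ c ⁻¹' (c '' S))) ⊆ (T \ B) ∪ ((T ∩ c ⁻¹' (c '' S)) \ S) := by
  rintro x ⟨hxT, hx⟩
  simp only [mem_union, mem_sdiff, mem_preimage, not_or, not_and, not_not] at hx
  by_cases hxB : x ∈ B
  · exact Or.inr ⟨⟨hxT, hx.2 hxB⟩, hx.1⟩
  · exact Or.inl ⟨hxT, hxB⟩

end Set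

/-- If `S` and `T` are rainbow independent sets in a coloured matroid,
then there is a rainbow independent set `S'` with `S ⊆ S' ⊆ S ∪ T` and
`|T \ S'| ≤ 2·|S \ T|`. -/
theorem stmt0 {α κ : Type*} (M : Matroid α) [M.Finite] (c : α → κ)
    (S T : Set α) (hS : M.Indep S) (hT : M.Indep T)
    (hSr : Set.InjOn c S) (hTr : Set.InjOn c T) :
    ∃ S' : Set α, M.Indep S' ∧ Set.InjOn c S' ∧ S ⊆ S' ∧ S' ⊆ S ∪ T ∧
      (T \ S').ncard ≤ 2 * (S \ T).ncard := by
  obtain ⟨B, hB, hSB⟩ :=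
    hS.subset_isBasis_of_subset subset_union_left (union_subset hS.subset_ground hT.subset_ground)
  set S' := S ∪ (B \ c ⁻¹' (c '' S))
  have hS'B : S' ⊆ B := union_subset hSB sdiff_subset
  have hS'rainbow : InjOn c S' := (hSr.union_sdiff_preimage_image hTr).mono
    (union_subset_union_right S (sdiff_preimage_image_subset_of_subset_union hB.subset))
  refine ⟨S', hB.indep.subset hS'B, hS'rainbow, subset_union_left, hS'B.trans hB.subset, ?_⟩
  have hBT : B \ T ⊆ S \ T := fun x ⟨hxB, hxT⟩ => ⟨(hB.subset hxB).resolve_right hxT, hxT⟩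
  have hcard : (T \ S').encard ≤ 2 * (S \ T).encard :=
    calc _ ≤ ((T \ B) ∪ ((T ∩ c ⁻¹' (c '' S)) \ S)).encard :=
          encard_le_encard sdiff_union_sdiff_preimage_image_subset
      _ ≤ (T \ B).encard + ((T ∩ c ⁻¹' (c '' S)) \ S).encard := encard_union_le _ _
      _ ≤ (B \ T).encard + (S \ T).encard :=
          add_le_add (hT.encard_sdiff_le_of_isBasis subset_union_right hB)
            (encard_inter_preimage_image_sdiff_le hTr)
      _ ≤ 2 * (S \ T).encard := by rw [two_mul]; gcongr
  rw [← (M.set_finite _ (sdiff_subset.trans hT.subset_ground)).cast_ncard_eq,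
    ← (M.set_finite _ (sdiff_subset.trans hS.subset_ground)).cast_ncard_eq] at hcard
  exact_mod_cast hcard
end

section
/- Let S be an independent set in a matroid and let B be a basis of the matroid. Then there is an injection φ: S → B such that for each x ∈ S, the element φ(x) is not in S \ {x} and the set (S \ {x}) ∪ {φ(x)} is independent, and for each b ∈ B \ φ(S), we have b ∉ S and the set S ∪ {b} is independent. -/
open Set

/-!
Extend `S` to a base `B'` with `S ⊆ B' ⊆ S ∪ B`, so that `B' \ B = S \ B`. By Hall's theorem there
is a bijection `σ : B' \ B → B \ B'` such that each `B' - x + σ x` is a base (Brualdi): if the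
elements of `N ⊆ B \ B'` are the only ones exchangeable with some `x ∈ T ⊆ B' \ B`, then every
other element of `B` lies in `⋂ x ∈ T, cl (B' - x) = cl (B' \ T)`, so `(B' \ T) ∪ N` spans and
`|T| ≤ |N|`. Take `φ = id` on `S ∩ B` and `φ = σ` on `S \ B`; then `B \ φ(S) ⊆ B'`, and `B'`
contains `S`.
-/

theorem Set.Finite.exists_injective_of_forall_encard_le {α β : Type*} {A : Set α}
    (hA : A.Finite) (r : α → β → Prop) (hr : ∀ a ∈ A, {b | r a b}.Finite)
    (hall : ∀ T ⊆ A, T.encard ≤ {b | ∃ a ∈ T, r a b}.encard) :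
    ∃ f : A → β, Function.Injective f ∧ ∀ a : A, r a (f a) := by
  classical
  have := hA.to_subtype
  let t : A → Finset β := fun a ↦ (hr a a.2).toFinset
  have hall' (s : Finset A) : s.card ≤ (s.biUnion t).card := by
    have key := hall (Subtype.val '' (s : Set A)) (by simp)
    have hN : {b | ∃ a ∈ Subtype.val '' (s : Set A), r a b} = (s.biUnion t : Set β) := by
      ext; simp [t]
    rwa [Subtype.val_injective.encard_image, hN, encard_coe_eq_coe_finsetCard,
      encard_coe_eq_coe_finsetCard, Nat.cast_le] at key
  simpa [t] using (Finset.all_card_le_biUnion_card_iff_exists_injective t).mp hall'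

theorem Set.InjOn.piecewise_id {α : Type*} {s t : Set α} [DecidablePred (· ∈ t)] {σ : α → α}
    (hσ : InjOn σ (s \ t)) (hσs : MapsTo σ (s \ t) sᶜ) : InjOn (t.piecewise id σ) s := by
  rw [← inter_union_sdiff s t, injOn_union disjoint_sdiff_inter.symm]
  refine ⟨fun x hx y hy hxy ↦ ?_, hσ.congr fun x hx ↦ (piecewise_eq_of_notMem _ _ _ hx.2).symm,
    fun x hx y hy hxy ↦ hσs hy ?_⟩
  · rwa [piecewise_eq_of_mem _ _ _ hx.2, piecewise_eq_of_mem _ _ _ hy.2] at hxy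
  · rw [piecewise_eq_of_mem _ _ _ hx.2, piecewise_eq_of_notMem _ _ _ hy.2] at hxy
    exact hxy ▸ hx.1

namespace Matroid
variable {α : Type*} {M : Matroid α}

lemma IsBase.mem_closure_sdiff_of_forall_not_isBase {B T : Set α} {y : α} (hB : M.IsBase B)
    (hT : T.Nonempty) (hTB : T ⊆ B) (h : ∀ x ∈ T, ¬ M.IsBase (insert y (B \ {x})))
    (hy : y ∈ M.E := by aesop_mat) : y ∈ M.closure (B \ T) := by
  have hBT : B \ T = ⋂ x ∈ T, B \ {x} := by
    ext a
    simp only [mem_sdiff, mem_iInter, mem_singleton_iff]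
    exact ⟨fun ha x _ ↦ ⟨ha.1, fun h ↦ ha.2 (h ▸ ‹x ∈ T›)⟩,
      fun ha ↦ ⟨(ha _ hT.some_mem).1, fun haT ↦ (ha a haT).2 rfl⟩⟩
  rw [hBT, closure_biInter_eq_biInter_closure_of_biUnion_indep hT (I := fun x ↦ B \ {x})
    (hB.indep.subset (iUnion₂_subset fun _ _ ↦ sdiff_subset)), mem_iInter₂]
  exact fun x hx ↦ by_contra fun hy' ↦ h x hx (hB.exchange_base_of_notMem_closure (hTB hx) hy')

lemma IsBase.encard_le_encard_exchangeable [M.RankFinite] {B₁ B₂ T : Set α} (hB₁ : M.IsBase B₁)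
    (hB₂ : M.IsBase B₂) (hT : T ⊆ B₁ \ B₂) :
    T.encard ≤ {y | ∃ x ∈ T, y ∈ B₂ \ B₁ ∧ M.IsBase (insert y (B₁ \ {x}))}.encard := by
  set N := {y | ∃ x ∈ T, y ∈ B₂ \ B₁ ∧ M.IsBase (insert y (B₁ \ {x}))}
  obtain rfl | hT₀ := T.eq_empty_or_nonempty
  · simp
  have hB₂X : B₂ ⊆ M.closure ((B₁ \ T) ∪ N) := by
    intro y hy
    by_cases hyN : y ∈ N
    · exact M.mem_closure_of_mem' (Or.inr hyN) (hB₂.subset_ground hy)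
    by_cases hyB₁ : y ∈ B₁
    · exact M.mem_closure_of_mem' (Or.inl ⟨hyB₁, fun hyT ↦ (hT hyT).2 hy⟩) (hB₂.subset_ground hy)
    refine M.closure_subset_closure subset_union_left ?_
    exact hB₁.mem_closure_sdiff_of_forall_not_isBase hT₀ (hT.trans sdiff_subset)
      (fun x hx hxy ↦ hyN ⟨x, hx, ⟨hy, hyB₁⟩, hxy⟩) (hB₂.subset_ground hy)
  have hcard : (B₁ \ T).encard + T.encard ≤ (B₁ \ T).encard + N.encard := calc
    (B₁ \ T).encard + T.encard = B₂.encard := by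
      rw [encard_sdiff_add_encard_of_subset (hT.trans sdiff_subset),
        hB₁.encard_eq_encard_of_isBase hB₂]
    _ ≤ M.eRk (M.closure ((B₁ \ T) ∪ N)) := hB₂.indep.encard_le_eRk_of_subset hB₂X
    _ ≤ ((B₁ \ T) ∪ N).encard := by rw [eRk_closure_eq]; exact M.eRk_le_encard _
    _ ≤ (B₁ \ T).encard + N.encard := encard_union_le _ _
  exact (ENat.add_le_add_iff_left (hB₁.finite.sdiff.encard_lt_top.ne)).mp hcard

theorem IsBase.exists_bijOn_exchange [M.RankFinite] {B₁ B₂ : Set α} (hB₁ : M.IsBase B₁)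
    (hB₂ : M.IsBase B₂) : ∃ σ : α → α, BijOn σ (B₁ \ B₂) (B₂ \ B₁) ∧
      ∀ x ∈ B₁ \ B₂, M.IsBase (insert (σ x) (B₁ \ {x})) := by
  classical
  obtain ⟨f, hf, hfB⟩ := hB₁.finite.sdiff.exists_injective_of_forall_encard_le
    (fun x y ↦ y ∈ B₂ \ B₁ ∧ M.IsBase (insert y (B₁ \ {x})))
    (fun _ _ ↦ hB₂.finite.sdiff.subset fun _ hy ↦ hy.1)
    (fun _ hT ↦ hB₁.encard_le_encard_exchangeable hB₂ hT)
  let σ : α → α := fun x ↦ if hx : x ∈ B₁ \ B₂ then f ⟨x, hx⟩ else x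
  have hσ (x) (hx : x ∈ B₁ \ B₂) : σ x = f ⟨x, hx⟩ := dif_pos hx
  have hmaps : MapsTo σ (B₁ \ B₂) (B₂ \ B₁) := fun x hx ↦ hσ x hx ▸ (hfB _).1
  have hinj : InjOn σ (B₁ \ B₂) := fun x hx y hy hxy ↦ by
    rw [hσ x hx, hσ y hy] at hxy
    exact congrArg Subtype.val (hf hxy)
  have himage : σ '' (B₁ \ B₂) = B₂ \ B₁ :=
    (hB₂.finite.sdiff.subset hmaps.image_subset).eq_of_subset_of_encard_le hmaps.image_subset
      (by rw [hinj.encard_image, hB₂.encard_sdiff_comm hB₁])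
  exact ⟨σ, ⟨hmaps, hinj, himage.ge⟩, fun x hx ↦ hσ x hx ▸ (hfB ⟨x, hx⟩).2⟩

end Matroid

/-- For an independent set `S` and a basis `B` of a matroid, there is an
injection `φ : S → B` such that `(S \ {x}) ∪ {φ x}` is independent for each `x ∈ S`
(with `φ x ∉ S \ {x}`), and `S ∪ {b}` is independent for each `b ∈ B \ φ(S)`
(with `b ∉ S`). -/
theorem stmt1 {α : Type*} (M : Matroid α) [M.Finite] (S B : Set α)
    (hS : M.Indep S) (hB : M.IsBase B) :
    ∃ φ : α → α, Set.InjOn φ S ∧ Set.MapsTo φ S B ∧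
      (∀ x ∈ S, φ x ∉ S \ {x} ∧ M.Indep (insert (φ x) (S \ {x}))) ∧
      (∀ b ∈ B \ (φ '' S), b ∉ S ∧ M.Indep (insert b S)) := by
  classical
  obtain ⟨B', hB', hSB', hB'SB⟩ := hS.exists_isBase_subset_union_isBase hB
  obtain ⟨σ, hσ, hσB⟩ := hB'.exists_bijOn_exchange hB
  have hB'B : B' \ B = S \ B := by
    ext x; exact ⟨fun hx ↦ ⟨(hB'SB hx.1).resolve_right hx.2, hx.2⟩, fun hx ↦ ⟨hSB' hx.1, hx.2⟩⟩
  rw [hB'B] at hσ hσB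
  have hσS : MapsTo σ (S \ B) Sᶜ := fun x hx hσx ↦ (hσ.mapsTo hx).2 (hSB' hσx)
  have hφB : ∀ x ∈ B, B.piecewise id σ x = x := fun x hx ↦ piecewise_eq_of_mem _ _ _ hx
  have hφσ : EqOn (B.piecewise id σ) σ (S \ B) := fun x hx ↦ piecewise_eq_of_notMem _ _ _ hx.2
  refine ⟨B.piecewise id σ, hσ.injOn.piecewise_id hσS, fun x hx ↦ ?_, fun x hx ↦ ?_, fun b hb ↦ ?_⟩
  · by_cases hxB : x ∈ B
    · rwa [hφB x hxB]
    · rw [hφσ ⟨hx, hxB⟩]; exact (hσ.mapsTo ⟨hx, hxB⟩).1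
  · by_cases hxB : x ∈ B
    · rw [hφB x hxB, insert_sdiff_singleton, insert_eq_of_mem hx]
      exact ⟨fun h ↦ h.2 rfl, hS⟩
    · rw [hφσ ⟨hx, hxB⟩]
      exact ⟨fun h ↦ hσS ⟨hx, hxB⟩ h.1,
        (hσB x ⟨hx, hxB⟩).indep.subset (insert_subset_insert (sdiff_subset_sdiff_left hSB'))⟩
  · have hbB' : b ∈ B' := by
      by_contra hbB'
      refine hb.2 (image_mono (sdiff_subset (t := B)) ?_)
      rw [hφσ.image_eq, hσ.image_eq]
      exact ⟨hb.1, hbB'⟩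
    exact ⟨fun hbS ↦ hb.2 ⟨b, hbS, hφB b hb.1⟩, hB'.indep.subset (insert_subset hbB' hSB')⟩
end

section
/- Let S and T be independent sets in a matroid. Then at least one of the following holds: (a) there is some x ∈ S with x ∉ T such that T ∪ {x} is independent; or (b) there is an injection φ: S → T such that for each x ∈ S, x ∉ T \ {φ(x)}, the set (T \ {φ(x)}) ∪ {x} is independent, and span((T \ {φ(x)}) ∪ {x}) = span(T). -/
noncomputable def mrk {α : Type*} (M : Matroid α) (X : Set α) : ℕ :=
  sSup {n | ∃ I, I ⊆ X ∧ M.Indep I ∧ I.ncard = n}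

/-- The span (closure) of a set: all ground set elements whose addition does not
increase the rank. -/
def mspan {α : Type*} (M : Matroid α) (X : Set α) : Set α :=
  {x ∈ M.E | mrk M (X ∪ {x}) = mrk M X}

/-! If no `x ∈ S \ T` extends `T`, then `S ⊆ cl T`. For `x ∈ S` let `N x` be the fundamental
circuit of `x` in `T`, intersected with `T` (so `N x = {x}` when `x ∈ T`); each `e ∈ N x` can be
exchanged for `x` without changing the closure. Every `A ⊆ S` is independent and lies in
`cl (⋃ x ∈ A, N x)`, so `|A| ≤ |⋃ x ∈ A, N x|`, and Hall's theorem yields an injective choice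
`φ x ∈ N x`. -/

open Set

lemma exists_injective_mem_of_encard_le_encard_biUnion {ι α : Type*} {S : Set ι}
    {N : ι → Set α} (hN : ∀ x ∈ S, (N x).Finite)
    (hall : ∀ A ⊆ S, A.Finite → A.encard ≤ (⋃ x ∈ A, N x).encard) :
    ∃ f : S → α, Function.Injective f ∧ ∀ x : S, f x ∈ N x := by
  classical
  let t : S → Finset α := fun x ↦ (hN x x.2).toFinset
  have hcoe (s : Finset S) : (⋃ x ∈ Subtype.val '' (s : Set S), N x) = ↑(s.biUnion t) := by
    ext; simp [t]
  have hall' (s : Finset S) : s.card ≤ (s.biUnion t).card := by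
    have h := hall _ (image_subset_iff.2 fun x _ ↦ x.2) (s.finite_toSet.image _)
    rwa [hcoe, Subtype.val_injective.injOn.encard_image, encard_coe_eq_coe_finsetCard,
      encard_coe_eq_coe_finsetCard, Nat.cast_le] at h
  obtain ⟨f, hf, hft⟩ := (Finset.all_card_le_biUnion_card_iff_exists_injective t).1 hall'
  exact ⟨f, hf, fun x ↦ by simpa [t] using hft x⟩

namespace Matroid

variable {α : Type*} {M : Matroid α} {I S T X : Set α} {x e : α}

lemma mrk_eq_toNat_eRk [M.RankFinite] (X : Set α) : mrk M X = (M.eRk X).toNat := by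
  obtain ⟨I, hI⟩ := M.exists_isBasis' X
  have hItop : I.encard ≠ ⊤ := by
    rw [hI.encard_eq_eRk, eRk_ne_top_iff]; exact M.isRkFinite_set X
  refine IsGreatest.csSup_eq ⟨⟨I, hI.subset, hI.indep, by rw [ncard_def, hI.encard_eq_eRk]⟩, ?_⟩
  rintro n ⟨J, hJX, hJ, rfl⟩
  rw [ncard_def, ← hI.encard_eq_eRk]
  exact ENat.toNat_le_toNat ((hJ.encard_le_eRk_of_subset hJX).trans hI.encard_eq_eRk.ge) hItop

lemma mspan_eq_closure [M.RankFinite] (X : Set α) : mspan M X = M.closure X := by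
  ext x
  simp only [mspan, mem_ofPred_eq, mrk_eq_toNat_eRk, union_singleton]
  refine ⟨fun ⟨hxE, hrk⟩ ↦ by_contra fun hxcl ↦ ?_, fun hx ↦ ⟨M.mem_ground_of_mem_closure hx, ?_⟩⟩
  · rw [eRk_insert_eq_add_one ⟨hxE, hxcl⟩, ENat.toNat_add (eRk_ne_top_iff.2 (M.isRkFinite_set X))
      ENat.one_ne_top] at hrk
    simp at hrk
  · rw [← eRk_insert_closure_eq, insert_eq_of_mem hx, eRk_closure_eq]

lemma mem_closure_fundCircuit_inter (hT : M.Indep T) (hx : x ∈ M.closure T) :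
    x ∈ M.closure (M.fundCircuit x T ∩ T) := by
  by_cases hxT : x ∈ T
  · rw [fundCircuit_eq_of_mem hxT, singleton_inter_of_mem hxT]
    exact M.mem_closure_of_mem rfl (singleton_subset_iff.2 (M.mem_ground_of_mem_closure hx))
  · rw [← fundCircuit_sdiff_eq_inter M hxT]
    exact (hT.fundCircuit_isCircuit hx hxT).mem_closure_sdiff_singleton_of_mem (mem_fundCircuit ..)

lemma notMem_sdiff_singleton_of_mem_fundCircuit (he : e ∈ M.fundCircuit x T) :
    x ∉ T \ {e} := by
  rintro ⟨hxT, hxe⟩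
  rw [fundCircuit_eq_of_mem hxT, mem_singleton_iff] at he
  exact hxe he.symm

lemma Indep.insert_sdiff_singleton_indep_of_mem_fundCircuit (hT : M.Indep T)
    (hx : x ∈ M.closure T) (he : e ∈ M.fundCircuit x T ∩ T) :
    M.Indep (insert x (T \ {e})) := by
  by_cases hxT : x ∈ T
  · rw [fundCircuit_eq_of_mem hxT, singleton_inter_of_mem hxT, mem_singleton_iff] at he
    rwa [he, insert_sdiff_singleton, insert_eq_of_mem hxT]
  · have hex : e ≠ x := fun h ↦ hxT (h ▸ he.2)
    rw [insert_sdiff_singleton_comm hex.symm]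
    exact (hT.mem_fundCircuit_iff hx hxT).1 he.1

lemma closure_insert_sdiff_singleton_eq (hx : x ∈ M.closure T) (he : e ∈ T)
    (hxe : x ∉ T \ {e}) (hind : M.Indep (insert x (T \ {e}))) :
    M.closure (insert x (T \ {e})) = M.closure T := by
  have hxcl : x ∉ M.closure (T \ {e}) := by
    simpa [hxe] using hind.notMem_closure_sdiff_of_mem (mem_insert x _)
  have hT : insert e (T \ {e}) = T := by rw [insert_sdiff_singleton, insert_eq_of_mem he]
  rw [closure_insert_congr (f := e) ⟨by rwa [hT], hxcl⟩, hT]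

lemma Indep.encard_le_encard_of_subset_closure (hI : M.Indep I) (hIX : I ⊆ M.closure X) :
    I.encard ≤ X.encard :=
  calc I.encard ≤ M.eRk (M.closure X) := hI.encard_le_eRk_of_subset hIX
    _ = M.eRk X := M.eRk_closure_eq X
    _ ≤ X.encard := M.eRk_le_encard X

lemma Indep.exists_injOn_mem_fundCircuit_inter [M.Finitary] (hS : M.Indep S)
    (hT : M.Indep T) (hST : S ⊆ M.closure T) :
    ∃ φ : α → α, InjOn φ S ∧ ∀ x ∈ S, φ x ∈ M.fundCircuit x T ∩ T := by
  classical
  have hfin (x) (hx : x ∈ S) : (M.fundCircuit x T ∩ T).Finite := by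
    by_cases hxT : x ∈ T
    · simp [fundCircuit_eq_of_mem hxT, hxT]
    · exact (hT.fundCircuit_isCircuit (hST hx) hxT).finite.inter_of_left T
  have hall (A) (hAS : A ⊆ S) (_ : A.Finite) :
      A.encard ≤ (⋃ x ∈ A, M.fundCircuit x T ∩ T).encard :=
    (hS.subset hAS).encard_le_encard_of_subset_closure fun x hx ↦ M.closure_subset_closure
      (subset_biUnion_of_mem hx) (mem_closure_fundCircuit_inter hT (hST (hAS hx)))
  obtain ⟨f, hf, hfN⟩ := exists_injective_mem_of_encard_le_encard_biUnion hfin hall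
  refine ⟨fun x ↦ if hx : x ∈ S then f ⟨x, hx⟩ else x, fun x hx y hy hxy ↦ ?_, fun x hx ↦ ?_⟩
  · exact congrArg Subtype.val (hf (by simpa [hx, hy] using hxy))
  · simpa [hx] using hfN ⟨x, hx⟩

end Matroid

open Matroid in
/-- For independent sets `S` and `T` in a matroid, either some `x ∈ S \ T`
can be added to `T` keeping independence, or there is an injection `φ : S → T` such that
`(T \ {φ x}) ∪ {x}` is independent with the same span as `T` for every `x ∈ S`. -/
theorem stmt2 {α : Type*} (M : Matroid α) [M.Finite] (S T : Set α)
    (hS : M.Indep S) (hT : M.Indep T) :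
    (∃ x ∈ S, x ∉ T ∧ M.Indep (insert x T)) ∨
    (∃ φ : α → α, Set.InjOn φ S ∧ Set.MapsTo φ S T ∧
      ∀ x ∈ S, x ∉ T \ {φ x} ∧ M.Indep (insert x (T \ {φ x})) ∧
        mspan M (insert x (T \ {φ x})) = mspan M T) := by
  by_cases h : ∃ x ∈ S, x ∉ T ∧ M.Indep (insert x T)
  · exact Or.inl h
  push Not at h
  have hST : S ⊆ M.closure T := fun x hx ↦
    hT.mem_closure_iff'.2 ⟨hS.subset_ground hx, fun hind ↦ by_contra fun hxT ↦ h x hx hxT hind⟩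
  obtain ⟨φ, hinj, hφ⟩ := hS.exists_injOn_mem_fundCircuit_inter hT hST
  refine Or.inr ⟨φ, hinj, fun x hx ↦ (hφ x hx).2, fun x hx ↦ ?_⟩
  have hxφ := notMem_sdiff_singleton_of_mem_fundCircuit (hφ x hx).1
  have hind := hT.insert_sdiff_singleton_indep_of_mem_fundCircuit (hST hx) (hφ x hx)
  refine ⟨hxφ, hind, ?_⟩
  rw [mspan_eq_closure, mspan_eq_closure]
  exact closure_insert_sdiff_singleton_eq (hST hx) (hφ x hx).2 hxφ hind
end

section
/- Let 0 < α < β and δ > 0. Let G be a bipartite graph with vertex classes X and Y and edge set E(G) ⊆ X × Y. Assume |X| ≤ α·|Y| and that every vertex y ∈ Y has degree deg(y) ≥ δ·|X|. Then there are at least (δ(β−α)/β)·|X|·|Y| edges (x,y) ∈ E(G) with deg(y) ≤ β·deg(x). -/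
/-- In a bipartite graph with parts `X`, `Y` and edge set `E ⊆ X × Y`,
if `|X| ≤ α|Y|` and every `y ∈ Y` has degree at least `δ|X|`, then there are at least
`(δ(β−α)/β)·|X|·|Y|` edges `(x,y)` with `deg(y) ≤ β·deg(x)`. -/
theorem stmt4 {V W : Type*} [DecidableEq V] [DecidableEq W]
    (α β δ : ℝ) (hα : 0 < α) (hαβ : α < β) (hδ : 0 < δ)
    (X : Finset V) (Y : Finset W) (E : Finset (V × W)) (hE : E ⊆ X ×ˢ Y)
    (hXY : (X.card : ℝ) ≤ α * Y.card)
    (hdeg : ∀ y ∈ Y, δ * X.card ≤ ((E.filter (fun p => p.2 = y)).card : ℝ)) :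
    (δ * (β - α) / β) * X.card * Y.card ≤
      ((E.filter (fun p =>
          ((E.filter (fun q => q.2 = p.2)).card : ℝ) ≤
            β * ((E.filter (fun q => q.1 = p.1)).card : ℝ))).card : ℝ) := by
  have hβ : (0:ℝ) < β := hα.trans hαβ
  rcases X.eq_empty_or_nonempty with hX | hX
  · have hXc : (X.card : ℝ) = 0 := by simp [hX]
    rw [hXc]
    have : (δ * (β - α) / β) * 0 * (Y.card:ℝ) = 0 := by ring
    rw [this]
    positivity
  have hXpos : (0:ℝ) < X.card := by exact_mod_cast Finset.card_pos.2 hX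
  have hδX : (0:ℝ) < δ * X.card := mul_pos hδ hXpos
  have hdY : ∀ y ∈ Y, (0:ℝ) < ((E.filter (fun q => q.2 = y)).card : ℝ) :=
    fun y hy => lt_of_lt_of_le hδX (hdeg y hy)
  -- f e = 1 / deg(e.2)
  have hsumE : ∑ e ∈ E, (1:ℝ) / ((E.filter (fun q => q.2 = e.2)).card : ℝ)
      = (Y.card : ℝ) := by
    rw [← Finset.sum_fiberwise_of_maps_to (g := Prod.snd) (t := Y)
      (fun e he => (Finset.mem_product.1 (hE he)).2)
      (fun e => (1:ℝ) / ((E.filter (fun q => q.2 = e.2)).card : ℝ))]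
    have : ∀ y ∈ Y, ∑ e ∈ E.filter (fun e => e.2 = y),
        (1:ℝ) / ((E.filter (fun q => q.2 = e.2)).card : ℝ) = 1 := by
      intro y hy
      have hne : ((E.filter (fun q => q.2 = y)).card : ℝ) ≠ 0 := (hdY y hy).ne'
      calc ∑ e ∈ E.filter (fun e => e.2 = y),
            (1:ℝ) / ((E.filter (fun q => q.2 = e.2)).card : ℝ)
          = ∑ _e ∈ E.filter (fun e => e.2 = y),
            (1:ℝ) / ((E.filter (fun q => q.2 = y)).card : ℝ) := by
            refine Finset.sum_congr rfl fun e he => ?_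
            rw [(Finset.mem_filter.1 he).2]
        _ = 1 := by
            rw [Finset.sum_const, nsmul_eq_mul, mul_one_div, div_self hne]
    rw [Finset.sum_congr rfl this, Finset.sum_const, nsmul_eq_mul, mul_one]
  have hsumX : ∑ e ∈ E, (1:ℝ) / ((E.filter (fun q => q.1 = e.1)).card : ℝ)
      ≤ (X.card : ℝ) := by
    rw [← Finset.sum_fiberwise_of_maps_to (g := Prod.fst) (t := X)
      (fun e he => (Finset.mem_product.1 (hE he)).1)
      (fun e => (1:ℝ) / ((E.filter (fun q => q.1 = e.1)).card : ℝ))]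
    calc ∑ x ∈ X, ∑ e ∈ E.filter (fun e => e.1 = x),
          (1:ℝ) / ((E.filter (fun q => q.1 = e.1)).card : ℝ)
        ≤ ∑ _x ∈ X, (1:ℝ) := by
          refine Finset.sum_le_sum fun x _hx => ?_
          have h1 : ∑ e ∈ E.filter (fun e => e.1 = x),
              (1:ℝ) / ((E.filter (fun q => q.1 = e.1)).card : ℝ)
              = ((E.filter (fun q => q.1 = x)).card : ℝ) *
                (1 / ((E.filter (fun q => q.1 = x)).card : ℝ)) := by
            rw [Finset.sum_congr rfl fun e he =>
              by rw [(Finset.mem_filter.1 he).2], Finset.sum_const, nsmul_eq_mul]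
          rw [h1]
          rcases eq_or_ne ((E.filter (fun q => q.1 = x)).card : ℝ) 0 with h | h
          · simp [h]
          · rw [mul_one_div, div_self h]
      _ = (X.card : ℝ) := by rw [Finset.sum_const, nsmul_eq_mul, mul_one]
  -- split E into good and bad
  set P : V × W → Prop := fun p =>
      ((E.filter (fun q => q.2 = p.2)).card : ℝ) ≤
        β * ((E.filter (fun q => q.1 = p.1)).card : ℝ) with hPdef
  have hsplit : (∑ e ∈ E.filter P, (1:ℝ) / ((E.filter (fun q => q.2 = e.2)).card : ℝ))
      + (∑ e ∈ E.filter (fun e => ¬ P e), (1:ℝ) / ((E.filter (fun q => q.2 = e.2)).card : ℝ))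
      = (Y.card : ℝ) := by
    rw [Finset.sum_filter_add_sum_filter_not, hsumE]
  -- bad part bound
  have hbad : ∑ e ∈ E.filter (fun e => ¬ P e),
      (1:ℝ) / ((E.filter (fun q => q.2 = e.2)).card : ℝ) ≤ (X.card : ℝ) / β := by
    have step1 : ∑ e ∈ E.filter (fun e => ¬ P e),
        (1:ℝ) / ((E.filter (fun q => q.2 = e.2)).card : ℝ)
        ≤ ∑ e ∈ E.filter (fun e => ¬ P e),
          (1/β) * ((1:ℝ) / ((E.filter (fun q => q.1 = e.1)).card : ℝ)) := by
      refine Finset.sum_le_sum fun e he => ?_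
      obtain ⟨heE, heP⟩ := Finset.mem_filter.1 he
      have hx : (0:ℝ) < ((E.filter (fun q => q.1 = e.1)).card : ℝ) := by
        have : e ∈ E.filter (fun q => q.1 = e.1) := Finset.mem_filter.2 ⟨heE, rfl⟩
        have := Finset.card_pos.2 ⟨e, this⟩
        exact_mod_cast this
      have hlt : β * ((E.filter (fun q => q.1 = e.1)).card : ℝ)
          < ((E.filter (fun q => q.2 = e.2)).card : ℝ) := not_le.1 heP
      have heq : (1/β) * ((1:ℝ) / ((E.filter (fun q => q.1 = e.1)).card : ℝ))
          = 1 / (β * ((E.filter (fun q => q.1 = e.1)).card : ℝ)) :=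
        one_div_mul_one_div β _
      rw [heq]
      exact one_div_le_one_div_of_le (by positivity) hlt.le
    refine step1.trans ?_
    rw [← Finset.mul_sum]
    have step2 : ∑ e ∈ E.filter (fun e => ¬ P e),
        (1:ℝ) / ((E.filter (fun q => q.1 = e.1)).card : ℝ)
        ≤ ∑ e ∈ E, (1:ℝ) / ((E.filter (fun q => q.1 = e.1)).card : ℝ) :=
      Finset.sum_le_sum_of_subset_of_nonneg (Finset.filter_subset _ _)
        (fun e _ _ => by positivity)
    calc (1/β) * ∑ e ∈ E.filter (fun e => ¬ P e),
          (1:ℝ) / ((E.filter (fun q => q.1 = e.1)).card : ℝ)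
        ≤ (1/β) * (X.card : ℝ) := by
          apply mul_le_mul_of_nonneg_left (step2.trans hsumX) (by positivity)
      _ = (X.card : ℝ) / β := by ring
  -- good part bound
  have hgood : ∑ e ∈ E.filter P,
      (1:ℝ) / ((E.filter (fun q => q.2 = e.2)).card : ℝ)
      ≤ ((E.filter P).card : ℝ) / (δ * X.card) := by
    have : ∀ e ∈ E.filter P, (1:ℝ) / ((E.filter (fun q => q.2 = e.2)).card : ℝ)
        ≤ 1 / (δ * X.card) := by
      intro e he
      have heE := Finset.mem_filter.1 he |>.1
      have hy : e.2 ∈ Y := (Finset.mem_product.1 (hE heE)).2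
      exact one_div_le_one_div_of_le hδX (hdeg e.2 hy)
    calc ∑ e ∈ E.filter P, (1:ℝ) / ((E.filter (fun q => q.2 = e.2)).card : ℝ)
        ≤ ∑ _e ∈ E.filter P, 1 / (δ * X.card) := Finset.sum_le_sum this
      _ = ((E.filter P).card : ℝ) * (1 / (δ * X.card)) := by
          rw [Finset.sum_const, nsmul_eq_mul]
      _ = ((E.filter P).card : ℝ) / (δ * X.card) := by ring
  -- combine
  have hmain : (Y.card : ℝ) ≤ ((E.filter P).card : ℝ) / (δ * X.card) + (X.card : ℝ) / β := by
    rw [← hsplit]; exact add_le_add hgood hbad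
  have hfinal : δ * X.card * ((Y.card : ℝ) - (X.card : ℝ) / β) ≤ ((E.filter P).card : ℝ) := by
    have h1 : δ * X.card * (Y.card : ℝ)
        ≤ ((E.filter P).card : ℝ) + δ * X.card * ((X.card : ℝ) / β) := by
      have := mul_le_mul_of_nonneg_left hmain hδX.le
      calc δ * X.card * (Y.card:ℝ) ≤ δ * X.card *
            (((E.filter P).card : ℝ) / (δ * X.card) + (X.card : ℝ) / β) := this
        _ = ((E.filter P).card : ℝ) + δ * X.card * ((X.card : ℝ) / β) := by
            field_simp
    nlinarith [h1]
  refine le_trans ?_ hfinal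
  have h2 : δ * (X.card:ℝ) * ((Y.card:ℝ) - (X.card:ℝ) / β) - (δ * (β - α) / β) * X.card * Y.card
      = (δ * X.card / β) * (α * Y.card - X.card) := by field_simp; ring
  nlinarith [mul_nonneg (by positivity : (0:ℝ) ≤ δ * X.card / β) (sub_nonneg.2 hXY), h2]
end

section
/- For any reals α, μ, δ, σ, λ > 0 with σ + λ ≥ α > σ, there exists ρ > 0 such that the following holds. Let G be a bipartite graph with vertex classes X and Y and edge set E(G) ⊆ X × Y such that |X| ≤ α·|Y|, every vertex y ∈ Y has degree at least δ·|X|, and every vertex x ∈ X has degree at most (1−μ)·|Y|. Then there is a set E ⊆ E(G) such that σ·Σ_{(x,y)∈E} deg(x) ≥ ρ·|X|·|Y|² + Σ_{(x,y)∈E} (deg(y) − λ·|Y|). -/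
set_option maxHeartbeats 1600000

/-- For positive reals `α, μ, δ, σ, λ` with `σ + λ ≥ α > σ` there exists
`ρ > 0` such that: for every bipartite graph with parts `X`, `Y` and edge set `E ⊆ X × Y`
with `|X| ≤ α|Y|`, minimum degree at least `δ|X|` on `Y` and maximum degree at most
`(1−μ)|Y|` on `X`, there is a set `E' ⊆ E` of edges with
`σ·∑_{(x,y)∈E'} deg(x) ≥ ρ|X||Y|² + ∑_{(x,y)∈E'} (deg(y) − λ|Y|)`. -/
theorem stmt5 (a μ δ σ lam : ℝ) (ha : 0 < a) (hμ : 0 < μ) (hδ : 0 < δ) (hσ : 0 < σ)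
    (hlam : 0 < lam) (h1 : a ≤ σ + lam) (h2 : σ < a) :
    ∃ ρ : ℝ, 0 < ρ ∧
      ∀ (V W : Type) [DecidableEq V] [DecidableEq W]
        (X : Finset V) (Y : Finset W) (E : Finset (V × W)),
        E ⊆ X ×ˢ Y →
        (X.card : ℝ) ≤ a * Y.card →
        (∀ y ∈ Y, δ * X.card ≤ ((E.filter (fun p => p.2 = y)).card : ℝ)) →
        (∀ x ∈ X, ((E.filter (fun p => p.1 = x)).card : ℝ) ≤ (1 - μ) * Y.card) →
        ∃ E' ⊆ E,
          ρ * X.card * (Y.card : ℝ) ^ 2 +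
              ∑ p ∈ E', (((E.filter (fun q => q.2 = p.2)).card : ℝ) - lam * Y.card) ≤
            σ * ∑ p ∈ E', ((E.filter (fun q => q.1 = p.1)).card : ℝ) := by
  classical
  have hsl : 0 < σ + lam := by linarith
  set κ : ℝ := lam * μ / (2 * (σ + lam)) with hκdef
  have hκpos : 0 < κ := by
    rw [hκdef]; exact div_pos (mul_pos hlam hμ) (by linarith)
  have hρpos : 0 < δ ^ 2 * κ * lam * μ / 4 := by
    apply div_pos _ (by norm_num)
    exact mul_pos (mul_pos (mul_pos (pow_pos hδ 2) hκpos) hlam) hμ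
  clear_value κ
  refine ⟨δ ^ 2 * κ * lam * μ / 4, hρpos, ?_⟩
  intro V W _ _ X Y E hE hXa hmin hmax
  rcases Nat.eq_zero_or_pos Y.card with hY0 | hY0
  · exact ⟨∅, Finset.empty_subset _, by simp [hY0]⟩
  rcases Nat.eq_zero_or_pos X.card with hX0 | hX0
  · exact ⟨∅, Finset.empty_subset _, by simp [hX0]⟩
  set Xc : ℝ := (X.card : ℝ) with hXcdef
  set Yc : ℝ := (Y.card : ℝ) with hYcdef
  have hXc : 0 < Xc := by rw [hXcdef]; exact_mod_cast hX0
  have hYc : 0 < Yc := by rw [hYcdef]; exact_mod_cast hY0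
  set dx : V × W → ℝ := fun e => ((E.filter (fun q => q.1 = e.1)).card : ℝ) with hdxdef
  set dy : V × W → ℝ := fun e => ((E.filter (fun q => q.2 = e.2)).card : ℝ) with hdydef
  clear_value Xc Yc dx dy
  have hmem : ∀ e ∈ E, e.1 ∈ X ∧ e.2 ∈ Y := fun e he => Finset.mem_product.mp (hE he)
  --基本 per-edge facts
  have hdx1 : ∀ e ∈ E, (1 : ℝ) ≤ dx e := by
    intro e he
    have h : e ∈ E.filter (fun q => q.1 = e.1) := Finset.mem_filter.mpr ⟨he, rfl⟩
    have := Finset.card_pos.mpr ⟨e, h⟩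
    simp only [hdxdef]
    exact_mod_cast this
  have hdxY : ∀ e ∈ E, dx e ≤ Yc := by
    intro e he
    have h : (E.filter (fun q => q.1 = e.1)).card ≤ Y.card := by
      apply Finset.card_le_card_of_injOn (fun q => q.2)
      · intro q hq
        exact (hmem q (Finset.mem_filter.mp hq).1).2
      · intro q hq r hr hqr
        have hq1 := (Finset.mem_filter.mp (Finset.mem_coe.mp hq)).2
        have hr1 := (Finset.mem_filter.mp (Finset.mem_coe.mp hr)).2
        exact Prod.ext (hq1.trans hr1.symm) hqr
    simp only [hdxdef]
    rw [hYcdef]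
    exact_mod_cast h
  have hdyX : ∀ e ∈ E, dy e ≤ Xc := by
    intro e he
    have h : (E.filter (fun q => q.2 = e.2)).card ≤ X.card := by
      apply Finset.card_le_card_of_injOn (fun q => q.1)
      · intro q hq
        exact (hmem q (Finset.mem_filter.mp hq).1).1
      · intro q hq r hr hqr
        have hq1 := (Finset.mem_filter.mp (Finset.mem_coe.mp hq)).2
        have hr1 := (Finset.mem_filter.mp (Finset.mem_coe.mp hr)).2
        exact Prod.ext hqr (hq1.trans hr1.symm)
    simp only [hdydef]
    rw [hXcdef]
    exact_mod_cast h
  have hdyδ : ∀ e ∈ E, δ * Xc ≤ dy e := by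
    intro e he
    have := hmin e.2 (hmem e he).2
    simpa only [hdydef, hXcdef] using this
  have hdy0 : ∀ e ∈ E, 0 < dy e := fun e he =>
    lt_of_lt_of_le (mul_pos hδ hXc) (hdyδ e he)
  have hdx0 : ∀ e ∈ E, 0 < dx e := fun e he =>
    lt_of_lt_of_le one_pos (hdx1 e he)
  have hdxμ : ∀ e ∈ E, dx e ≤ (1 - μ) * Yc := by
    intro e he
    have := hmax e.1 (hmem e he).1
    simpa only [hdxdef, hYcdef] using this
  -- |E| ≥ δ Xc Yc
  have hEfib : E.card = ∑ y ∈ Y, (E.filter (fun e => e.2 = y)).card :=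
    Finset.card_eq_sum_card_fiberwise (fun e he => (hmem e he).2)
  have hEcR : δ * Xc * Yc ≤ (E.card : ℝ) := by
    have hsum : (Y.card : ℝ) * (δ * Xc) ≤ ∑ y ∈ Y, ((E.filter (fun e => e.2 = y)).card : ℝ) := by
      calc (Y.card : ℝ) * (δ * Xc) = ∑ _y ∈ Y, (δ * Xc) := by
            rw [Finset.sum_const, nsmul_eq_mul]
        _ ≤ _ := Finset.sum_le_sum (fun y hy => hmin y hy)
    have hcast : ((E.card : ℕ) : ℝ) = ∑ y ∈ Y, ((E.filter (fun e => e.2 = y)).card : ℝ) := by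
      rw [hEfib]; push_cast; ring
    rw [hcast]
    calc δ * Xc * Yc = (Y.card : ℝ) * (δ * Xc) := by rw [← hYcdef]; ring
    _ ≤ _ := hsum
  -- μ ≤ 1 and δ ≤ 1
  have hEne : E.Nonempty := by
    rw [← Finset.card_pos]
    have h0 : (0 : ℝ) < (E.card : ℝ) :=
      lt_of_lt_of_le (mul_pos (mul_pos hδ hXc) hYc) hEcR
    exact_mod_cast h0
  have hμ1 : μ ≤ 1 := by
    obtain ⟨e0, he0⟩ := hEne
    have h1' := hdx1 e0 he0
    have h2' := hdxμ e0 he0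
    by_contra h
    push_neg at h
    nlinarith [mul_nonpos_of_nonpos_of_nonneg (by linarith : 1 - μ ≤ 0) hYc.le]
  have hδ1 : δ ≤ 1 := by
    obtain ⟨e0, he0⟩ := hEne
    have := hdyδ e0 he0
    have h2' := hdyX e0 he0
    nlinarith
  -- reciprocal degree sums
  have hsx : ∑ e ∈ E, 1 / dx e ≤ Xc := by
    rw [← Finset.sum_fiberwise_of_maps_to (fun e he => (hmem e he).1) (fun e => 1 / dx e)]
    have hinner : ∀ x ∈ X, (∑ e ∈ E.filter (fun e => e.1 = x), 1 / dx e) ≤ 1 := by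
      intro x hx
      have hconst : ∀ e ∈ E.filter (fun e => e.1 = x),
          1 / dx e = 1 / (((E.filter (fun e => e.1 = x)).card : ℝ)) := by
        intro e he
        have h1' : e.1 = x := (Finset.mem_filter.mp he).2
        simp only [hdxdef]
        rw [h1']
      rw [Finset.sum_congr rfl hconst, Finset.sum_const, nsmul_eq_mul]
      rcases eq_or_ne ((E.filter (fun e => e.1 = x)).card) 0 with h0 | h0
      · rw [h0]; norm_num
      · rw [mul_one_div, div_self (by exact_mod_cast h0)]
    calc (∑ x ∈ X, ∑ e ∈ E.filter (fun e => e.1 = x), 1 / dx e)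
        ≤ ∑ x ∈ X, (1 : ℝ) := Finset.sum_le_sum hinner
      _ = Xc := by rw [Finset.sum_const, nsmul_eq_mul, mul_one, hXcdef]
  have hsy : Yc ≤ ∑ e ∈ E, 1 / dy e := by
    rw [← Finset.sum_fiberwise_of_maps_to (fun e he => (hmem e he).2) (fun e => 1 / dy e)]
    have hinner : ∀ y ∈ Y, (∑ e ∈ E.filter (fun e => e.2 = y), 1 / dy e) = 1 := by
      intro y hy
      have hcard : ((E.filter (fun e => e.2 = y)).card : ℝ) ≠ 0 := by
        have := hmin y hy
        have h0 : (0 : ℝ) < δ * Xc := mul_pos hδ hXc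
        intro hc
        rw [hc] at this
        linarith
      have hconst : ∀ e ∈ E.filter (fun e => e.2 = y),
          1 / dy e = 1 / (((E.filter (fun e => e.2 = y)).card : ℝ)) := by
        intro e he
        have h1' : e.2 = y := (Finset.mem_filter.mp he).2
        simp only [hdydef]
        rw [h1']
      rw [Finset.sum_congr rfl hconst, Finset.sum_const, nsmul_eq_mul, mul_one_div,
        div_self hcard]
    have hrw : ∑ y ∈ Y, ∑ e ∈ E.filter (fun e => e.2 = y), 1 / dy e = ∑ _y ∈ Y, (1 : ℝ) :=
      Finset.sum_congr rfl hinner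
    rw [hrw, Finset.sum_const, nsmul_eq_mul, mul_one]
    exact le_of_eq hYcdef
  -- the master inequality
  have hsum_eq : ∑ e ∈ E, (1 / (Xc * dx e) - 1 / (Yc * dy e))
      = (∑ e ∈ E, 1 / dx e) / Xc - (∑ e ∈ E, 1 / dy e) / Yc := by
    rw [Finset.sum_sub_distrib, Finset.sum_div, Finset.sum_div]
    congr 1 <;> refine Finset.sum_congr rfl fun e he => ?_ <;>
      · rw [div_div, mul_comm]
  have hSle : ∑ e ∈ E, (1 / (Xc * dx e) - 1 / (Yc * dy e)) ≤ 0 := by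
    rw [hsum_eq]
    have t1 : (∑ e ∈ E, 1 / dx e) / Xc ≤ 1 := by
      rw [div_le_one hXc]; exact hsx
    have t2 : (1 : ℝ) ≤ (∑ e ∈ E, 1 / dy e) / Yc := by
      rw [le_div_iff₀ hYc, one_mul]; exact hsy
    linarith
  -- split into good and bad edges
  set P : V × W → Prop := fun e => dy e * Yc ≤ dx e * Xc + κ * (Xc * Yc) with hPdef
  set good : Finset (V × W) := E.filter P with hgooddef
  set bad : Finset (V × W) := E.filter (fun e => ¬ P e) with hbaddef
  clear_value good bad
  have hgoodmem : ∀ e ∈ good, e ∈ E ∧ P e := by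
    intro e he
    rw [hgooddef] at he
    exact Finset.mem_filter.mp he
  have hbadmem : ∀ e ∈ bad, e ∈ E ∧ ¬ P e := by
    intro e he
    rw [hbaddef] at he
    exact Finset.mem_filter.mp he
  have hgoodE : ∀ e ∈ good, e ∈ E := fun e he => (hgoodmem e he).1
  have hbadE : ∀ e ∈ bad, e ∈ E := fun e he => (hbadmem e he).1
  -- lower bound for bad edge terms
  have hb : ∀ e ∈ bad, κ / (Xc * Yc) ≤ 1 / (Xc * dx e) - 1 / (Yc * dy e) := by
    intro e he
    have heE := hbadE e he
    have hnP : ¬ P e := (hbadmem e he).2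
    rw [hPdef] at hnP
    push_neg at hnP
    have hxd : 0 < Xc * dx e := mul_pos hXc (hdx0 e heE)
    have hyd : 0 < Yc * dy e := mul_pos hYc (hdy0 e heE)
    have heq : 1 / (Xc * dx e) - 1 / (Yc * dy e)
        = (Yc * dy e - Xc * dx e) / ((Xc * dx e) * (Yc * dy e)) := by
      rw [div_sub_div _ _ (ne_of_gt hxd) (ne_of_gt hyd), one_mul, mul_one]
    rw [heq, div_le_div_iff₀ (mul_pos hXc hYc) (mul_pos hxd hyd)]
    have key1 : κ * (Xc * Yc) ≤ Yc * dy e - Xc * dx e := by linarith [hnP]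
    have key2 : dx e * dy e ≤ Yc * Xc :=
      mul_le_mul (hdxY e heE) (hdyX e heE) (hdy0 e heE).le hYc.le
    have s2 : κ * (dx e * dy e) * (Xc * Yc) ≤ κ * (Yc * Xc) * (Xc * Yc) :=
      mul_le_mul_of_nonneg_right (mul_le_mul_of_nonneg_left key2 hκpos.le)
        (mul_pos hXc hYc).le
    have s3 : (κ * (Xc * Yc)) * (Xc * Yc) ≤ (Yc * dy e - Xc * dx e) * (Xc * Yc) :=
      mul_le_mul_of_nonneg_right key1 (mul_pos hXc hYc).le
    calc κ * ((Xc * dx e) * (Yc * dy e)) = κ * (dx e * dy e) * (Xc * Yc) := by ring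
      _ ≤ κ * (Yc * Xc) * (Xc * Yc) := s2
      _ = (κ * (Xc * Yc)) * (Xc * Yc) := by ring
      _ ≤ (Yc * dy e - Xc * dx e) * (Xc * Yc) := s3
  -- lower bound for good edge terms
  have hg : ∀ e ∈ good, -(1 / (δ * (Xc * Yc))) ≤ 1 / (Xc * dx e) - 1 / (Yc * dy e) := by
    intro e he
    have heE := hgoodE e he
    have h0 : (0 : ℝ) ≤ 1 / (Xc * dx e) := by
      have := mul_pos hXc (hdx0 e heE)
      positivity
    have hden : 0 < Yc * (δ * Xc) := mul_pos hYc (mul_pos hδ hXc)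
    have hmono : 1 / (Yc * dy e) ≤ 1 / (Yc * (δ * Xc)) := by
      apply one_div_le_one_div_of_le hden
      exact mul_le_mul_of_nonneg_left (hdyδ e heE) hYc.le
    have hre : 1 / (Yc * (δ * Xc)) = 1 / (δ * (Xc * Yc)) := by
      rw [show Yc * (δ * Xc) = δ * (Xc * Yc) by ring]
    rw [hre] at hmono
    linarith
  -- combine
  have hsplitS := Finset.sum_filter_add_sum_filter_not E P
    (fun e => 1 / (Xc * dx e) - 1 / (Yc * dy e))
  have hbsum : (bad.card : ℝ) * (κ / (Xc * Yc))
      ≤ ∑ e ∈ bad, (1 / (Xc * dx e) - 1 / (Yc * dy e)) := by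
    have := Finset.card_nsmul_le_sum bad
      (fun e => 1 / (Xc * dx e) - 1 / (Yc * dy e)) (κ / (Xc * Yc)) hb
    rwa [nsmul_eq_mul] at this
  have hgsum : (good.card : ℝ) * (-(1 / (δ * (Xc * Yc))))
      ≤ ∑ e ∈ good, (1 / (Xc * dx e) - 1 / (Yc * dy e)) := by
    have := Finset.card_nsmul_le_sum good
      (fun e => 1 / (Xc * dx e) - 1 / (Yc * dy e)) (-(1 / (δ * (Xc * Yc)))) hg
    rwa [nsmul_eq_mul] at this
  have h4 : (bad.card : ℝ) * (κ / (Xc * Yc)) ≤ (good.card : ℝ) * (1 / (δ * (Xc * Yc))) := by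
    have hsg : ∑ e ∈ good, (1 / (Xc * dx e) - 1 / (Yc * dy e))
        + ∑ e ∈ bad, (1 / (Xc * dx e) - 1 / (Yc * dy e)) ≤ 0 := by
      rw [hgooddef, hbaddef]
      rw [hsplitS]
      exact hSle
    linarith
  have hgb : κ * δ * (bad.card : ℝ) ≤ (good.card : ℝ) := by
    have h4' : ((bad.card : ℝ) * κ) / (Xc * Yc) ≤ (good.card : ℝ) / (δ * (Xc * Yc)) := by
      have e1 : ((bad.card : ℝ) * κ) / (Xc * Yc) = (bad.card : ℝ) * (κ / (Xc * Yc)) :=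
        mul_div_assoc _ _ _
      have e2 : (good.card : ℝ) / (δ * (Xc * Yc))
          = (good.card : ℝ) * (1 / (δ * (Xc * Yc))) := (mul_one_div _ _).symm
      rw [e1, e2]
      exact h4
    rw [div_le_div_iff₀ (mul_pos hXc hYc) (mul_pos hδ (mul_pos hXc hYc))] at h4'
    have h6 : (κ * δ * (bad.card : ℝ)) * (Xc * Yc) ≤ (good.card : ℝ) * (Xc * Yc) := by
      linarith [h4']
    exact le_of_mul_le_mul_right h6 (mul_pos hXc hYc)
  -- good has many edges
  have hcardsplit : (good.card : ℝ) + (bad.card : ℝ) = (E.card : ℝ) := by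
    rw [hgooddef, hbaddef]
    exact_mod_cast Finset.card_filter_add_card_filter_not (p := P)
  have hκhalf : κ ≤ 1 / 2 := by
    rw [hκdef, div_le_iff₀ (by linarith : (0:ℝ) < 2 * (σ + lam))]
    nlinarith [mul_le_mul_of_nonneg_left hμ1 hlam.le]
  have hκδ1 : κ * δ ≤ 1 := by
    nlinarith [mul_le_mul hκhalf hδ1 hδ.le (by norm_num : (0:ℝ) ≤ 1/2)]
  have hgnn : (0 : ℝ) ≤ (good.card : ℝ) := Nat.cast_nonneg _
  have hgfinal : κ * δ * (δ * Xc * Yc) ≤ 2 * (good.card : ℝ) := by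
    have hEκ : κ * δ * (δ * Xc * Yc) ≤ κ * δ * (E.card : ℝ) :=
      mul_le_mul_of_nonneg_left hEcR (le_of_lt (mul_pos hκpos hδ))
    nlinarith [mul_nonneg (by linarith : (0:ℝ) ≤ 1 - κ * δ) hgnn]
  -- per-edge weight bound on good edges
  have hXasl : Xc ≤ (σ + lam) * Yc := by
    have : a * Yc ≤ (σ + lam) * Yc := mul_le_mul_of_nonneg_right h1 hYc.le
    linarith [hXa]
  have hksl : κ * (σ + lam) = lam * μ / 2 := by
    rw [hκdef]
    field_simp
  have hκXY : κ * (Xc * Yc) ≤ lam * μ / 2 * (Yc * Yc) := by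
    have hh : κ * Xc ≤ κ * ((σ + lam) * Yc) := mul_le_mul_of_nonneg_left hXasl hκpos.le
    have hh2 : κ * ((σ + lam) * Yc) = lam * μ / 2 * Yc := by
      rw [← mul_assoc, hksl]
    nlinarith [mul_le_mul_of_nonneg_right hh hYc.le]
  have hw : ∀ e ∈ good, lam * μ / 2 * Yc ≤ σ * dx e - (dy e - lam * Yc) := by
    intro e he
    have heE := hgoodE e he
    have hP' : dy e * Yc ≤ dx e * Xc + κ * (Xc * Yc) := by
      have := (hgoodmem e he).2
      rwa [hPdef] at this
    have hu : (0 : ℝ) ≤ (1 - μ) * Yc - dx e := by linarith [hdxμ e heE]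
    have hv : (0 : ℝ) ≤ (σ + lam) * Yc - Xc := by linarith
    have hdxnn : (0 : ℝ) ≤ dx e := (hdx0 e heE).le
    have hmul : (lam * μ / 2 * Yc) * Yc ≤ (σ * dx e - (dy e - lam * Yc)) * Yc := by
      nlinarith [hP', hκXY, mul_nonneg hdxnn hv, mul_nonneg (mul_nonneg hlam.le hu) hYc.le]
    exact le_of_mul_le_mul_right hmul hYc
  -- final assembly
  refine ⟨good, by rw [hgooddef]; exact Finset.filter_subset _ _, ?_⟩
  have hkey : (good.card : ℝ) * (lam * μ / 2 * Yc)
      ≤ ∑ e ∈ good, (σ * dx e - (dy e - lam * Yc)) := by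
    have := Finset.card_nsmul_le_sum good
      (fun e => σ * dx e - (dy e - lam * Yc)) (lam * μ / 2 * Yc) hw
    rwa [nsmul_eq_mul] at this
  have hsplit2 : ∑ e ∈ good, (σ * dx e - (dy e - lam * Yc))
      = σ * (∑ e ∈ good, dx e) - ∑ e ∈ good, (dy e - lam * Yc) := by
    rw [Finset.sum_sub_distrib, Finset.mul_sum]
  have hfinal : δ ^ 2 * κ * lam * μ / 4 * Xc * Yc ^ 2 + ∑ p ∈ good, (dy p - lam * Yc)
      ≤ σ * ∑ p ∈ good, dx p := by
    have hstep : κ * δ * (δ * Xc * Yc) * (lam * μ / 4 * Yc)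
        ≤ 2 * (good.card : ℝ) * (lam * μ / 4 * Yc) := by
      apply mul_le_mul_of_nonneg_right hgfinal
      nlinarith [mul_pos (mul_pos hlam hμ) hYc]
    nlinarith [hkey, hsplit2, hstep]
  simpa only [hdxdef, hdydef] using hfinal
end

section
/- Let k be a positive integer and let S₁ and S₂ be k-overcrowded subsets of a matroid. Then S₁ ∪ S₂ is also k-overcrowded. -/
/-- A set `S` is `k`-overcrowded if `|S \ Sp| ≥ k·(rk S − rk Sp)` for every `Sp ⊆ S`. -/
def Overcrowded {α : Type*} (M : Matroid α) (k : ℕ) (S : Set α) : Prop :=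
  ∀ Sp ⊆ S, k * (mrk M S - mrk M Sp) ≤ (S \ Sp).ncard

/-!
With `g X = k · rk X - |X|`, a subset `S` of the ground set is `k`-overcrowded exactly when it
minimises `g` among its subsets. Since `g` is submodular, `g (S ∪ X) ≤ g S + g X - g (S ∩ X) ≤ g X`
for such an `S`; applying this to `S₁` and then to `S₂` gives
`g (S₁ ∪ S₂) ≤ g (S₁ ∪ X) ≤ g X` for every `X ⊆ S₁ ∪ S₂`.
-/

open Set

lemma le_of_submodular_of_forall_le {α : Type*} {g : Set α → ℤ} {U S X : Set α}
    (hg : ∀ A ⊆ U, ∀ B ⊆ U, g (A ∪ B) + g (A ∩ B) ≤ g A + g B) (hS : S ⊆ U) (hX : X ⊆ U)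
    (hmin : ∀ Y ⊆ S, g S ≤ g Y) : g (S ∪ X) ≤ g X := by
  linarith [hg S hS X hX, hmin (S ∩ X) inter_subset_left]

namespace Matroid

variable {α : Type*} {M : Matroid α}

lemma cast_mrk_eq_eRk [M.RankFinite] (X : Set α) : (mrk M X : ℕ∞) = M.eRk X := by
  obtain ⟨I, hI⟩ := M.exists_isBasis' X
  have hIfin : I.Finite := hI.indep.finite
  suffices h : IsGreatest {n | ∃ J, J ⊆ X ∧ M.Indep J ∧ J.ncard = n} I.ncard by
    rw [mrk, h.csSup_eq, hI.eRk_eq_encard, hIfin.cast_ncard_eq]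
  refine ⟨⟨I, hI.subset, hI.indep, rfl⟩, ?_⟩
  rintro _ ⟨J, hJX, hJ, rfl⟩
  have h := hJ.encard_le_eRk_of_subset hJX
  rwa [hI.eRk_eq_encard, ← hJ.finite.cast_ncard_eq, ← hIfin.cast_ncard_eq, Nat.cast_le] at h

lemma mrk_mono [M.RankFinite] {X Y : Set α} (hXY : X ⊆ Y) : mrk M X ≤ mrk M Y := by
  simpa only [← Nat.cast_le (α := ℕ∞), cast_mrk_eq_eRk] using M.eRk_mono hXY

lemma mrk_inter_add_mrk_union_le [M.RankFinite] (X Y : Set α) :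
    mrk M (X ∩ Y) + mrk M (X ∪ Y) ≤ mrk M X + mrk M Y := by
  simpa only [← Nat.cast_le (α := ℕ∞), Nat.cast_add, cast_mrk_eq_eRk] using
    M.eRk_inter_add_eRk_union_le X Y

noncomputable def overcrowdingExcess (M : Matroid α) (k : ℕ) (X : Set α) : ℤ :=
  k * mrk M X - X.ncard

variable [M.Finite] {k : ℕ}

lemma overcrowdingExcess_union_add_inter_le {A B : Set α} (hA : A ⊆ M.E) (hB : B ⊆ M.E) :
    M.overcrowdingExcess k (A ∪ B) + M.overcrowdingExcess k (A ∩ B) ≤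
      M.overcrowdingExcess k A + M.overcrowdingExcess k B := by
  have hcard := ncard_union_add_ncard_inter A B (M.set_finite A hA) (M.set_finite B hB)
  have hrk := Nat.mul_le_mul_left k (M.mrk_inter_add_mrk_union_le A B)
  simp only [overcrowdingExcess]
  zify at hcard hrk
  linarith

lemma overcrowded_iff {S : Set α} (hS : S ⊆ M.E) :
    Overcrowded M k S ↔ ∀ X ⊆ S, M.overcrowdingExcess k S ≤ M.overcrowdingExcess k X := by
  have hSfin : S.Finite := M.set_finite S hS
  refine forall₂_congr fun X hXS ↦ ?_
  have hdiff : ((S \ X).ncard : ℤ) = S.ncard - X.ncard := by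
    rw [ncard_sdiff hXS (hSfin.subset hXS), Nat.cast_sub (ncard_le_ncard hXS hSfin)]
  rw [overcrowdingExcess, overcrowdingExcess, ← Nat.cast_le (α := ℤ), Nat.cast_mul,
    Nat.cast_sub (mrk_mono hXS), hdiff]
  constructor <;> intro h <;> linarith

end Matroid

open Matroid in
theorem stmt6_general {α : Type*} (M : Matroid α) [M.Finite] (k : ℕ)
    (S₁ S₂ : Set α) (hS₁E : S₁ ⊆ M.E) (hS₂E : S₂ ⊆ M.E)
    (h₁ : Overcrowded M k S₁) (h₂ : Overcrowded M k S₂) :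
    Overcrowded M k (S₁ ∪ S₂) := by
  have hsub := fun A (hA : A ⊆ M.E) B (hB : B ⊆ M.E) ↦
    overcrowdingExcess_union_add_inter_le (k := k) hA hB
  rw [overcrowded_iff hS₁E] at h₁
  rw [overcrowded_iff hS₂E] at h₂
  rw [overcrowded_iff (union_subset hS₁E hS₂E)]
  intro X hX
  have hXE : X ⊆ M.E := hX.trans (union_subset hS₁E hS₂E)
  have hS₁X : S₁ ∪ X ⊆ M.E := union_subset hS₁E hXE
  calc M.overcrowdingExcess k (S₁ ∪ S₂)
      = M.overcrowdingExcess k (S₂ ∪ (S₁ ∪ X)) := by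
        rw [union_left_comm, ← union_assoc, union_eq_left.mpr hX]
    _ ≤ M.overcrowdingExcess k (S₁ ∪ X) := le_of_submodular_of_forall_le hsub hS₂E hS₁X h₂
    _ ≤ M.overcrowdingExcess k X := le_of_submodular_of_forall_le hsub hS₁E hXE h₁

/-- The union of two `k`-overcrowded sets is `k`-overcrowded. -/
theorem stmt6 {α : Type*} (M : Matroid α) [M.Finite] (k : ℕ) (hk : 0 < k)
    (S₁ S₂ : Set α) (hS₁E : S₁ ⊆ M.E) (hS₂E : S₂ ⊆ M.E)
    (h₁ : Overcrowded M k S₁) (h₂ : Overcrowded M k S₂) :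
    Overcrowded M k (S₁ ∪ S₂) :=
  stmt6_general M k S₁ S₂ hS₁E hS₂E h₁ h₂
end

section
/- Let k be a positive integer and let U be a subset of a matroid. If there exists a set S ⊆ U with |S| > k·rk(S), then S has a non-empty k-overcrowded subset. -/
lemma mrk_bddAbove {α : Type*} (M : Matroid α) [M.Finite] (X : Set α) :
    BddAbove {n | ∃ I, I ⊆ X ∧ M.Indep I ∧ I.ncard = n} := by
  refine ⟨M.E.ncard, ?_⟩
  rintro n ⟨I, _, hI, rfl⟩
  exact Set.ncard_le_ncard hI.subset_ground M.ground_finite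

lemma mrk_mono {α : Type*} (M : Matroid α) [M.Finite] {X Y : Set α} (h : X ⊆ Y) :
    mrk M X ≤ mrk M Y := by
  apply csSup_le_csSup (mrk_bddAbove M Y)
  · exact ⟨0, ∅, Set.empty_subset _, M.empty_indep, Set.ncard_empty _⟩
  · rintro n ⟨I, hIX, hI, rfl⟩
    exact ⟨I, hIX.trans h, hI, rfl⟩

lemma stmt7_aux {α : Type*} (M : Matroid α) [M.Finite] (k : ℕ) (hk : 0 < k) :
    ∀ n (S : Set α), S.ncard = n → S ⊆ M.E → k * mrk M S < S.ncard →
      ∃ S' ⊆ S, S'.Nonempty ∧ Overcrowded M k S' := by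
  intro n
  induction n using Nat.strong_induction_on with
  | _ n IH =>
    intro S hn hSE hbig
    have hSfin : S.Finite := M.ground_finite.subset hSE
    have hSne : S.Nonempty := by
      rw [Set.nonempty_iff_ne_empty]
      rintro rfl
      simp [Set.ncard_empty] at hbig
    by_cases h : Overcrowded M k S
    · exact ⟨S, subset_rfl, hSne, h⟩
    · simp only [Overcrowded, not_forall] at h
      obtain ⟨Sp, hSp, hlt⟩ := h
      push_neg at hlt
      have hfinSp : Sp.Finite := hSfin.subset hSp
      have hmono : mrk M Sp ≤ mrk M S := mrk_mono M hSp
      have hcard : (S \ Sp).ncard = S.ncard - Sp.ncard := Set.ncard_diff hSp hfinSp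
      have hple : Sp.ncard ≤ S.ncard := Set.ncard_le_ncard hSp hSfin
      have hdistrib : k * (mrk M S - mrk M Sp) + k * mrk M Sp = k * mrk M S := by
        rw [← Nat.mul_add, Nat.sub_add_cancel hmono]
      -- derive k * mrk M Sp < Sp.ncard
      have hkb : k * mrk M Sp < Sp.ncard := by omega
      have hbstrict : mrk M Sp < mrk M S := by
        have : k * mrk M Sp < k * mrk M S := by omega
        exact Nat.lt_of_mul_lt_mul_left this
      have hne : Sp ≠ S := by
        rintro rfl; exact absurd rfl hbstrict.ne
      have hss : Sp ⊂ S := ⟨hSp, fun h' => hne (hSp.antisymm h')⟩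
      have hplt : Sp.ncard < S.ncard := Set.ncard_lt_ncard hss hSfin
      obtain ⟨S', hS'sub, hS'ne, hS'oc⟩ :=
        IH Sp.ncard (by omega) Sp rfl (hSp.trans hSE) hkb
      exact ⟨S', hS'sub.trans hSp, hS'ne, hS'oc⟩

/-- If `S ⊆ U` satisfies `|S| > k·rk(S)`, then `S` has a non-empty
`k`-overcrowded subset. -/
theorem stmt7 {α : Type*} (M : Matroid α) [M.Finite] (k : ℕ) (hk : 0 < k)
    (U S : Set α) (hU : U ⊆ M.E) (hSU : S ⊆ U)
    (hbig : k * mrk M S < S.ncard) :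
    ∃ S' ⊆ S, S'.Nonempty ∧ Overcrowded M k S' := by
  exact stmt7_aux M k hk S.ncard S rfl (hSU.trans hU) hbig
end

section
/- Let k be a positive integer and let U be a subset of a coloured matroid. If the k-deadlock of U is empty (i.e., U has no non-empty k-overcrowded subset), then U can be partitioned into at most k independent sets. -/
open Set

namespace Stmt10Aux

variable {α : Type*} {M : Matroid α}

/-- The key exchange lemma: swapping `u` in for `x1` preserves arcs that have no shortcut. -/
lemma key_swap {I0 : Set α} {u x1 w z : α} (hI : M.Indep I0) (hu : u ∈ M.E) (huI : u ∉ I0)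
    (hx1 : x1 ∈ I0) (hw : w ∈ I0) (hne : x1 ≠ w)
    (h1 : M.Indep (insert u I0 \ {x1}))
    (h2 : ¬ M.Indep (insert u I0 \ {w}))
    (hz : z ∉ I0) (hzu : z ≠ u)
    (h3 : M.Indep (insert z I0 \ {w})) :
    M.Indep (insert z (insert u I0 \ {x1}) \ {w}) := by
  have hux1 : u ≠ x1 := fun h => huI (h ▸ hx1)
  have huw : u ≠ w := fun h => huI (h ▸ hw)
  have hzw : z ≠ w := fun h => hz (h ▸ hw)
  have hzx1 : z ≠ x1 := fun h => hz (h ▸ hx1)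
  -- rewrite the sets
  have e1 : insert u I0 \ {x1} = insert u (I0 \ {x1}) :=
    insert_diff_of_notMem _ (by simp only [mem_singleton_iff]; exact hux1)
  have e2 : insert u I0 \ {w} = insert u (I0 \ {w}) :=
    insert_diff_of_notMem _ (by simp only [mem_singleton_iff]; exact huw)
  have e3 : insert z I0 \ {w} = insert z (I0 \ {w}) :=
    insert_diff_of_notMem _ (by simp only [mem_singleton_iff]; exact hzw)
  set B : Set α := I0 \ {x1, w} with hB
  have hBsub : B ⊆ I0 := diff_subset
  have hIB : M.Indep B := hI.subset hBsub
  have hzE : z ∈ M.E := h3.subset_ground (by simp [hzw])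
  -- I0 \ {w} = insert x1 B
  have ew : I0 \ {w} = insert x1 B := by
    ext a
    simp only [hB, mem_diff, mem_insert_iff, mem_singleton_iff]
    constructor
    · rintro ⟨ha, haw⟩
      by_cases h : a = x1
      · exact Or.inl h
      · exact Or.inr ⟨ha, by tauto⟩
    · rintro (rfl | ⟨ha, h⟩)
      · exact ⟨hx1, hne⟩
      · exact ⟨ha, by tauto⟩
  -- I0 \ {x1} = insert w B
  have ex1 : I0 \ {x1} = insert w B := by
    ext a
    simp only [hB, mem_diff, mem_insert_iff, mem_singleton_iff]
    constructor
    · rintro ⟨ha, haw⟩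
      by_cases h : a = w
      · exact Or.inl h
      · exact Or.inr ⟨ha, by tauto⟩
    · rintro (rfl | ⟨ha, h⟩)
      · exact ⟨hw, hne.symm⟩
      · exact ⟨ha, by tauto⟩
  have hInd_x1 : M.Indep (I0 \ {x1}) := hI.subset diff_subset
  have hInd_w : M.Indep (I0 \ {w}) := hI.subset diff_subset
  have hucl1 : u ∉ M.closure (I0 \ {x1}) := by
    rw [hInd_x1.notMem_closure_iff_of_notMem (fun h => huI h.1) hu]
    rwa [e1] at h1
  have hucl2 : u ∈ M.closure (I0 \ {w}) := by
    by_contra hcon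
    rw [hInd_w.notMem_closure_iff_of_notMem (fun h => huI h.1) hu] at hcon
    rw [e2] at h2; exact h2 hcon
  have huB : u ∉ M.closure B := fun h => hucl1 (by rw [ex1]; exact M.closure_subset_closure (subset_insert _ _) h)
  -- z ∉ closure (I0 \ {w})
  have hzcl : z ∉ M.closure (I0 \ {w}) := by
    rw [hInd_w.notMem_closure_iff_of_notMem (fun h => hz h.1) hzE]
    rwa [e3] at h3
  -- main claim : u ∉ closure (insert z B)
  have hmain : u ∉ M.closure (insert z B) := by
    intro hmem
    have hx1ex : x1 ∈ M.closure (insert u B) \ M.closure B := by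
      refine Matroid.closure_exchange ⟨?_, huB⟩
      rwa [← ew]
    have hzex : z ∈ M.closure (insert u B) \ M.closure B :=
      Matroid.closure_exchange ⟨hmem, huB⟩
    have hcl_eq : M.closure (insert u (insert x1 B)) = M.closure (insert x1 B) := by
      apply Matroid.closure_insert_eq_of_mem_closure
      rwa [← ew]
    have : z ∈ M.closure (insert x1 B) := by
      rw [← hcl_eq]
      exact M.closure_subset_closure (insert_subset_insert (subset_insert _ _)) hzex.1
    rw [← ew] at this
    exact hzcl this
  -- conclude
  have hIndzB : M.Indep (insert z B) := by
    rw [e3, ew] at h3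
    exact h3.subset (insert_subset_insert (subset_insert _ _))
  have huzB : u ∉ insert z B := by
    intro h
    rcases mem_insert_iff.1 h with h' | h'
    · exact hzu h'.symm
    · exact huI (hBsub h')
  have : M.Indep (insert u (insert z B)) := by
    rw [hIndzB.insert_indep_iff_of_notMem huzB]
    exact ⟨hu, hmain⟩
  refine this.subset ?_
  intro a ha
  simp only [mem_diff, mem_insert_iff, mem_singleton_iff, hB] at ha ⊢
  tauto


/-- After swapping `u` in for `x1`, the closure of the class is unchanged. -/
lemma closure_swap {I0 : Set α} {u x1 : α} (hI0 : M.Indep I0) (hu : u ∈ M.E) (huI : u ∉ I0)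
    (hx1 : x1 ∈ I0) (hcl : u ∈ M.closure I0) (h1 : M.Indep (insert u I0 \ {x1})) :
    M.closure (insert u I0 \ {x1}) = M.closure I0 := by
  have hux1 : u ≠ x1 := fun h => huI (h ▸ hx1)
  have e1 : insert u I0 \ {x1} = insert u (I0 \ {x1}) :=
    insert_diff_of_notMem _ (by simp only [mem_singleton_iff]; exact hux1)
  have hInd_x1 : M.Indep (I0 \ {x1}) := hI0.subset diff_subset
  have hucl1 : u ∉ M.closure (I0 \ {x1}) := by
    rw [hInd_x1.notMem_closure_iff_of_notMem (fun h => huI h.1) hu]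
    rwa [e1] at h1
  have hins : insert x1 (I0 \ {x1}) = I0 := insert_diff_singleton.trans (insert_eq_of_mem hx1)
  have hx1cl : x1 ∈ M.closure (insert u (I0 \ {x1})) := by
    have := Matroid.closure_exchange (M := M) (e := u) (f := x1) (X := I0 \ {x1})
      ⟨by rwa [hins], hucl1⟩
    exact this.1
  rw [e1]
  apply subset_antisymm
  · apply Matroid.closure_subset_closure_of_subset_closure
    exact insert_subset hcl (diff_subset.trans (M.subset_closure I0 hI0.subset_ground))
  · apply Matroid.closure_subset_closure_of_subset_closure
    intro a ha
    by_cases h : a = x1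
    · exact h ▸ hx1cl
    · exact M.subset_closure _ (by
        rw [e1] at h1; exact h1.subset_ground) (Or.inr ⟨ha, h⟩)

/-- If `insert x I0` is dependent, then `x` is spanned by the exchangeable elements. -/
lemma mem_closure_swapset {I0 : Set α} {x : α} (hI : M.Indep I0) (hx : x ∈ M.E) (hxI : x ∉ I0)
    (hfin : I0.Finite) (hdep : ¬ M.Indep (insert x I0)) :
    x ∈ M.closure {y ∈ I0 | M.Indep (insert x I0 \ {y})} := by
  have hxcl : x ∈ M.closure I0 := by
    by_contra h
    exact hdep ((hI.notMem_closure_iff_of_notMem hxI hx).1 h)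
  -- find a minimal subset S of I0 with x ∈ closure S
  suffices H : ∀ n : ℕ, ∀ S ⊆ I0, S.ncard ≤ n → x ∈ M.closure S →
      x ∈ M.closure {y ∈ I0 | M.Indep (insert x I0 \ {y})} by
    exact H I0.ncard I0 Subset.rfl le_rfl hxcl
  intro n
  induction n with
  | zero =>
    intro S hS hcard hmem
    have hSfin : S.Finite := hfin.subset hS
    have hSe : S = ∅ := by
      rw [← Set.ncard_eq_zero hSfin]; omega
    rw [hSe] at hmem
    exact M.closure_subset_closure (empty_subset _) hmem
  | succ n ih =>
    intro S hS hcard hmem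
    by_cases hstep : ∃ y ∈ S, x ∈ M.closure (S \ {y})
    · obtain ⟨y, hyS, hy⟩ := hstep
      refine ih (S \ {y}) (diff_subset.trans hS) ?_ hy
      have : (S \ {y}).ncard < S.ncard :=
        Set.ncard_diff_singleton_lt_of_mem hyS (hfin.subset hS)
      omega
    · push_neg at hstep
      -- every y ∈ S is exchangeable
      have hsub : S ⊆ {y ∈ I0 | M.Indep (insert x I0 \ {y})} := by
        intro y hyS
        refine ⟨hS hyS, ?_⟩
        have hyI0 : y ∈ I0 := hS hyS
        have exy : insert x I0 \ {y} = insert x (I0 \ {y}) :=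
          insert_diff_of_notMem _ (by simp only [mem_singleton_iff]; exact fun h => hxI (h ▸ hyI0))
        rw [exy]
        have hIy : M.Indep (I0 \ {y}) := hI.subset diff_subset
        rw [hIy.insert_indep_iff_of_notMem (fun h => hxI h.1)]
        refine ⟨hx, ?_⟩
        -- suppose x ∈ closure (I0 \ {y}); derive y ∈ closure (I0 \ {y}) : contradiction
        intro hcon
        have hxS' : x ∉ M.closure (S \ {y}) := hstep y hyS
        have hinsS : insert y (S \ {y}) = S := insert_diff_singleton.trans (insert_eq_of_mem hyS)
        have hyex : y ∈ M.closure (insert x (S \ {y})) \ M.closure (S \ {y}) :=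
          Matroid.closure_exchange ⟨by rwa [hinsS], hxS'⟩
        have hsub2 : insert x (S \ {y}) ⊆ M.closure (I0 \ {y}) := by
          apply insert_subset hcon
          refine Subset.trans ?_ (M.subset_closure (I0 \ {y}) hIy.subset_ground)
          intro a ha; exact ⟨hS ha.1, ha.2⟩
        have : y ∈ M.closure (I0 \ {y}) :=
          M.closure_subset_closure_of_subset_closure hsub2 hyex.1
        exact hI.notMem_closure_diff_of_mem hyI0 this
      exact M.closure_subset_closure hsub hmem

/-- An independent set contained in the closure of a finite independent set is no larger. -/
lemma ncard_le_of_indep_subset_closure [M.Finite] {T X : Set α} (hT : M.Indep T) (hX : M.Indep X)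
    (hTX : T ⊆ M.closure X) : T.ncard ≤ X.ncard := by
  have hXfin : X.Finite := M.ground_finite.subset hX.subset_ground
  have hTfin : T.Finite := M.ground_finite.subset hT.subset_ground
  by_contra h
  push_neg at h
  have hlt : X.encard < T.encard := by
    rw [← hXfin.cast_ncard_eq, ← hTfin.cast_ncard_eq]
    exact_mod_cast h
  obtain ⟨e, heTX, hins⟩ := hX.augment hT hlt
  have heE : e ∈ M.E := hT.subset_ground heTX.1
  have : e ∉ M.closure X := (hX.notMem_closure_iff_of_notMem heTX.2 heE).2 hins
  exact this (hTX heTX.1)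


end Stmt10Aux

namespace Stmt10Aux

lemma mrk_le {X : Set α} {n : ℕ}
    (h : ∀ T ⊆ X, M.Indep T → T.ncard ≤ n) : mrk M X ≤ n := by
  apply csSup_le
  · exact ⟨0, ∅, empty_subset _, M.empty_indep, by simp⟩
  rintro m ⟨I, hIX, hI, rfl⟩
  exact h I hIX hI

lemma le_mrk {X T : Set α} (hXfin : X.Finite) (hT : T ⊆ X) (hTi : M.Indep T) :
    T.ncard ≤ mrk M X := by
  apply le_csSup
  · refine ⟨X.ncard, ?_⟩
    rintro m ⟨I, hIX, hI, rfl⟩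
    exact Set.ncard_le_ncard hIX hXfin
  · exact ⟨T, hT, hTi, rfl⟩

lemma mrk_empty (M : Matroid α) : mrk M ∅ = 0 := by
  apply Nat.le_antisymm _ (Nat.zero_le _)
  apply mrk_le
  intro T hT _
  rw [subset_empty_iff.1 hT]
  simp

lemma ncard_iUnion_fin : ∀ {k : ℕ} (A : Fin k → Set α), (∀ i, (A i).Finite) →
    (∀ i j, i ≠ j → Disjoint (A i) (A j)) →
    (⋃ i, A i).ncard = ∑ i, (A i).ncard := by
  intro k
  induction k with
  | zero => intro A _ _; simp
  | succ n ih =>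
    intro A hfin hdisj
    have he : (⋃ i, A i) = A 0 ∪ ⋃ i : Fin n, A i.succ := by
      ext a
      simp only [mem_iUnion, mem_union]
      constructor
      · rintro ⟨i, hi⟩
        rcases Fin.eq_zero_or_eq_succ i with rfl | ⟨j, rfl⟩
        · exact Or.inl hi
        · exact Or.inr ⟨j, hi⟩
      · rintro (h | ⟨j, hj⟩)
        · exact ⟨0, h⟩
        · exact ⟨j.succ, hj⟩
    have hd : Disjoint (A 0) (⋃ i : Fin n, A i.succ) := by
      rw [Set.disjoint_iUnion_right]
      intro i
      exact hdisj 0 i.succ (Fin.succ_ne_zero i).symm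
    rw [he, Set.ncard_union_eq hd (hfin 0) (Set.finite_iUnion (fun i => hfin i.succ)),
      ih (fun i => A i.succ) (fun i => hfin i.succ)
        (fun i j hij => hdisj i.succ j.succ (by simpa using hij)),
      Fin.sum_univ_succ]

end Stmt10Aux
namespace Stmt10Aux

variable {k : ℕ}

def Arc (M : Matroid α) (I : Fin k → Set α) (x y : α) : Prop :=
  ∃ i, x ∉ I i ∧ y ∈ I i ∧ M.Indep (insert x (I i) \ {y})

def Ins (M : Matroid α) (I : Fin k → Set α) (x : α) : Prop :=
  ∃ i, x ∉ I i ∧ M.Indep (insert x (I i))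

def PathTo (M : Matroid α) (I : Fin k → Set α) : α → List α → Prop
  | x, [] => Ins M I x
  | x, y :: ys => Arc M I x y ∧ PathTo M I y ys

lemma pathTo_nil {I : Fin k → Set α} {x : α} : PathTo M I x [] ↔ Ins M I x := Iff.rfl

lemma pathTo_cons {I : Fin k → Set α} {x y : α} {ys : List α} :
    PathTo M I x (y :: ys) ↔ Arc M I x y ∧ PathTo M I y ys := Iff.rfl

lemma insert_step {I : Fin k → Set α} {u : α} (hI : ∀ i, M.Indep (I i))
    (hdisj : ∀ i j, i ≠ j → Disjoint (I i) (I j)) (huI : u ∉ ⋃ i, I i) (h : Ins M I u) :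
    ∃ J : Fin k → Set α, (∀ i, M.Indep (J i)) ∧ (∀ i j, i ≠ j → Disjoint (J i) (J j)) ∧
      (⋃ i, J i) = insert u (⋃ i, I i) := by
  obtain ⟨c, hc, hci⟩ := h
  have hu' : ∀ j, u ∉ I j := fun j hj => huI (mem_iUnion.2 ⟨j, hj⟩)
  refine ⟨Function.update I c (insert u (I c)), ?_, ?_, ?_⟩
  · intro i
    rcases eq_or_ne i c with rfl | h
    · rw [Function.update_self]; exact hci
    · rw [Function.update_of_ne h]; exact hI i
  · intro i j hij
    rcases eq_or_ne i c with rfl | hi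
    · rw [Function.update_self, Function.update_of_ne hij.symm]
      exact Set.disjoint_left.2 (by
        rintro a (rfl | ha)
        · exact hu' j
        · exact Set.disjoint_left.1 (hdisj i j hij) ha)
    · rcases eq_or_ne j c with rfl | hj
      · rw [Function.update_self, Function.update_of_ne hi]
        exact Set.disjoint_right.2 (by
          rintro a (rfl | ha)
          · exact hu' i
          · exact Set.disjoint_right.1 (hdisj i j hij) ha)
      · rw [Function.update_of_ne hi, Function.update_of_ne hj]; exact hdisj i j hij
  · ext a
    simp only [mem_iUnion, mem_insert_iff]
    constructor
    · rintro ⟨i, hi⟩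
      rcases eq_or_ne i c with rfl | h
      · rw [Function.update_self] at hi
        rcases hi with rfl | hi
        · exact Or.inl rfl
        · exact Or.inr ⟨i, hi⟩
      · rw [Function.update_of_ne h] at hi; exact Or.inr ⟨i, hi⟩
    · rintro (rfl | ⟨i, hi⟩)
      · exact ⟨c, by rw [Function.update_self]; exact mem_insert _ _⟩
      · rcases eq_or_ne i c with rfl | h
        · exact ⟨i, by rw [Function.update_self]; exact mem_insert_of_mem _ hi⟩
        · exact ⟨i, by rw [Function.update_of_ne h]; exact hi⟩

lemma transfer {I : Fin k → Set α} {u x1 : α} {i0 : Fin k} {m : ℕ}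
    (hI : ∀ i, M.Indep (I i)) (hu : u ∈ M.E)
    (hno : ∀ xs, PathTo M I u xs → m < xs.length)
    (hui0 : u ∉ I i0) (hx1 : x1 ∈ I i0) (hJ0 : M.Indep (insert u (I i0) \ {x1})) :
    ∀ zs z, PathTo M I z zs → zs.length ≤ m →
      PathTo M (Function.update I i0 (insert u (I i0) \ {x1})) z zs := by
  set J0 := insert u (I i0) \ {x1} with hJ0def
  have hnoIns : ¬ Ins M I u := fun h => by simpa using hno [] h
  have hdep : ¬ M.Indep (insert u (I i0)) := fun h => hnoIns ⟨i0, hui0, h⟩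
  have hclu : u ∈ M.closure (I i0) := by
    by_contra h
    rw [(hI i0).notMem_closure_iff_of_notMem hui0 hu] at h
    exact hdep h
  have hcleq : M.closure J0 = M.closure (I i0) :=
    closure_swap (hI i0) hu hui0 hx1 hclu hJ0
  intro zs
  induction zs with
  | nil =>
    intro z hz _
    obtain ⟨c, hzc, hzi⟩ := pathTo_nil.1 hz
    rcases eq_or_ne c i0 with rfl | hc
    · have hzu : z ≠ u := by
        rintro rfl
        simpa using hno [] ⟨c, hzc, hzi⟩
      have hzE : z ∈ M.E := hzi.subset_ground (mem_insert _ _)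
      have hzcl : z ∉ M.closure (I c) := by
        rw [(hI c).notMem_closure_iff_of_notMem hzc hzE]; exact hzi
      have hzJ0 : z ∉ J0 := by
        intro h
        rcases mem_insert_iff.1 h.1 with h' | h'
        · exact hzu h'
        · exact hzc h'
      refine pathTo_nil.2 ⟨c, ?_, ?_⟩
      · rwa [Function.update_self]
      · rw [Function.update_self]
        rw [hJ0.insert_indep_iff_of_notMem hzJ0]
        exact ⟨hzE, by rw [hcleq]; exact hzcl⟩
    · refine pathTo_nil.2 ⟨c, ?_, ?_⟩
      · rwa [Function.update_of_ne hc]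
      · rwa [Function.update_of_ne hc]
  | cons w ws ih =>
    intro z hz hlen
    obtain ⟨harc, hrest⟩ := pathTo_cons.1 hz
    have hlen' : ws.length ≤ m := by simp only [List.length_cons] at hlen; omega
    refine pathTo_cons.2 ⟨?_, ih w hrest hlen'⟩
    obtain ⟨i, hzi, hwi, hind⟩ := harc
    rcases eq_or_ne i i0 with rfl | hi
    · have hlen2 : ws.length + 1 ≤ m := by simp only [List.length_cons] at hlen; omega
      have hzu : z ≠ u := by
        rintro rfl
        have := hno (w :: ws) ⟨⟨i, hzi, hwi, hind⟩, hrest⟩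
        simp only [List.length_cons] at this; omega
      have hnsc : ¬ M.Indep (insert u (I i) \ {w}) := by
        intro hcon
        have := hno (w :: ws) ⟨⟨i, hui0, hwi, hcon⟩, hrest⟩
        simp only [List.length_cons] at this; omega
      have hwx1 : x1 ≠ w := by
        rintro rfl
        have := hno (x1 :: ws) ⟨⟨i, hui0, hwi, hJ0⟩, hrest⟩
        simp only [List.length_cons] at this; omega
      have hkey := key_swap (hI i) hu hui0 hx1 hwi hwx1 hJ0 hnsc hzi hzu hind
      refine ⟨i, ?_, ?_, ?_⟩
      · rw [Function.update_self]
        intro h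
        rcases mem_insert_iff.1 h.1 with h' | h'
        · exact hzu h'
        · exact hzi h'
      · rw [Function.update_self]
        refine ⟨mem_insert_iff.2 (Or.inr hwi), ?_⟩
        simp only [mem_singleton_iff]
        exact fun h => hwx1 h.symm
      · rw [Function.update_self]
        exact hkey
    · exact ⟨i, by rw [Function.update_of_ne hi]; exact hzi,
        by rw [Function.update_of_ne hi]; exact hwi,
        by rw [Function.update_of_ne hi]; exact hind⟩

lemma aug : ∀ (m : ℕ) (I : Fin k → Set α) (u : α),
    (∀ i, M.Indep (I i)) → (∀ i j, i ≠ j → Disjoint (I i) (I j)) → u ∈ M.E → u ∉ ⋃ i, I i →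
    (∃ xs, PathTo M I u xs ∧ xs.length ≤ m) →
    ∃ J : Fin k → Set α, (∀ i, M.Indep (J i)) ∧ (∀ i j, i ≠ j → Disjoint (J i) (J j)) ∧
      (⋃ i, J i) = insert u (⋃ i, I i) := by
  intro m
  induction m with
  | zero =>
    rintro I u hI hdisj hu huU ⟨xs, hxs, hlen⟩
    have hxs0 : xs = [] := List.length_eq_zero_iff.1 (Nat.le_zero.1 hlen)
    subst hxs0
    exact insert_step hI hdisj huU (pathTo_nil.1 hxs)
  | succ m ih =>
    rintro I u hI hdisj hu huU ⟨xs, hxs, hlen⟩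
    by_cases hshort : ∃ ys, PathTo M I u ys ∧ ys.length ≤ m
    · exact ih I u hI hdisj hu huU hshort
    have hno : ∀ ys, PathTo M I u ys → m < ys.length :=
      fun ys hys => not_le.1 (fun hc => hshort ⟨ys, hys, hc⟩)
    cases xs with
    | nil => simpa using hno [] hxs
    | cons x1 rest =>
      obtain ⟨⟨i0, hui0, hx1i0, hind⟩, hrest⟩ := pathTo_cons.1 hxs
      set J0 := insert u (I i0) \ {x1} with hJ0def
      set I' := Function.update I i0 J0 with hI'def
      have hu' : ∀ j, u ∉ I j := fun j hj => huU (mem_iUnion.2 ⟨j, hj⟩)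
      have hux1 : u ≠ x1 := fun h => hui0 (h ▸ hx1i0)
      have hlen' : rest.length ≤ m := by simp only [List.length_cons] at hlen; omega
      have htrans := transfer hI hu hno hui0 hx1i0 hind rest x1 hrest hlen'
      have hx1E : x1 ∈ M.E := (hI i0).subset_ground hx1i0
      have hx1only : ∀ j, x1 ∈ I j → j = i0 := by
        intro j hj
        by_contra h
        exact Set.disjoint_left.1 (hdisj j i0 h) hj hx1i0
      have hI'i : ∀ i, M.Indep (I' i) := by
        intro i
        rcases eq_or_ne i i0 with rfl | h
        · rw [hI'def, Function.update_self]; exact hind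
        · rw [hI'def, Function.update_of_ne h]; exact hI i
      have hJ0sub : J0 ⊆ insert u (I i0) := diff_subset
      have hdisj' : ∀ i j, i ≠ j → Disjoint (I' i) (I' j) := by
        intro i j hij
        rcases eq_or_ne i i0 with rfl | hi
        · rw [hI'def, Function.update_self, Function.update_of_ne hij.symm]
          refine Set.disjoint_left.2 ?_
          intro a ha
          rcases mem_insert_iff.1 (hJ0sub ha) with rfl | ha'
          · exact hu' j
          · exact Set.disjoint_left.1 (hdisj i j hij) ha'
        · rcases eq_or_ne j i0 with rfl | hj
          · rw [hI'def, Function.update_self, Function.update_of_ne hi]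
            refine Set.disjoint_right.2 ?_
            intro a ha
            rcases mem_insert_iff.1 (hJ0sub ha) with rfl | ha'
            · exact hu' i
            · exact Set.disjoint_right.1 (hdisj i j hij) ha'
          · rw [hI'def, Function.update_of_ne hi, Function.update_of_ne hj]
            exact hdisj i j hij
      have hU' : (⋃ i, I' i) = insert u (⋃ i, I i) \ {x1} := by
        ext a
        simp only [mem_iUnion, mem_diff, mem_insert_iff, mem_singleton_iff]
        constructor
        · rintro ⟨i, hi⟩
          rcases eq_or_ne i i0 with rfl | h
          · rw [hI'def, Function.update_self] at hi
            rcases mem_insert_iff.1 hi.1 with rfl | h'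
            · exact ⟨Or.inl rfl, by simpa using hi.2⟩
            · exact ⟨Or.inr ⟨i, h'⟩, by simpa using hi.2⟩
          · rw [hI'def, Function.update_of_ne h] at hi
            refine ⟨Or.inr ⟨i, hi⟩, ?_⟩
            intro hax1
            exact h (hx1only i (hax1 ▸ hi))
        · rintro ⟨(rfl | ⟨i, hi⟩), hax1⟩
          · refine ⟨i0, ?_⟩
            rw [hI'def, Function.update_self]
            exact ⟨mem_insert _ _, by simpa using hax1⟩
          · rcases eq_or_ne i i0 with rfl | h
            · refine ⟨i, ?_⟩
              rw [hI'def, Function.update_self]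
              exact ⟨mem_insert_of_mem _ hi, by simpa using hax1⟩
            · exact ⟨i, by rw [hI'def, Function.update_of_ne h]; exact hi⟩
      have hx1U : x1 ∉ ⋃ i, I' i := by rw [hU']; simp
      obtain ⟨J, hJ1, hJ2, hJ3⟩ := ih I' x1 hI'i hdisj' hx1E hx1U ⟨rest, htrans, hlen'⟩
      refine ⟨J, hJ1, hJ2, ?_⟩
      rw [hJ3, hU', insert_diff_singleton,
        insert_eq_of_mem (mem_insert_iff.2 (Or.inr (mem_iUnion.2 ⟨i0, hx1i0⟩)))]

end Stmt10Aux
namespace Stmt10Aux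

variable {α : Type*} {M : Matroid α} {k : ℕ}

lemma aug_or_violation [M.Finite] {I : Fin k → Set α} {u : α}
    (hI : ∀ i, M.Indep (I i)) (hdisj : ∀ i j, i ≠ j → Disjoint (I i) (I j))
    (hu : u ∈ M.E) (huU : u ∉ ⋃ i, I i) :
    (∃ J : Fin k → Set α, (∀ i, M.Indep (J i)) ∧ (∀ i j, i ≠ j → Disjoint (J i) (J j)) ∧
      (⋃ i, J i) = insert u (⋃ i, I i)) ∨
    (∃ S : Set α, S ⊆ insert u (⋃ i, I i) ∧ k * mrk M S < S.ncard) := by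
  by_cases hreach : ∃ x, Relation.ReflTransGen (Arc M I) u x ∧ Ins M I x
  · left
    obtain ⟨x, hx, hxi⟩ := hreach
    have hpath : ∃ xs, PathTo M I u xs := by
      clear huU hu
      induction hx using Relation.ReflTransGen.head_induction_on with
      | refl => exact ⟨[], hxi⟩
      | head h _ ih =>
        obtain ⟨xs, hxs⟩ := ih
        exact ⟨_ :: xs, h, hxs⟩
    obtain ⟨xs, hxs⟩ := hpath
    exact aug xs.length I u hI hdisj hu huU ⟨xs, hxs, le_rfl⟩
  · right
    push_neg at hreach
    set R := {x | Relation.ReflTransGen (Arc M I) u x} with hRdef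
    have huR : u ∈ R := Relation.ReflTransGen.refl
    have hRsub : R ⊆ insert u (⋃ i, I i) := by
      intro x hx
      induction hx with
      | refl => exact mem_insert _ _
      | tail _ harc _ =>
        obtain ⟨i, _, hyi, _⟩ := harc
        exact mem_insert_of_mem _ (mem_iUnion.2 ⟨i, hyi⟩)
    have hfinU : (⋃ i, I i).Finite :=
      Set.finite_iUnion (fun i => M.ground_finite.subset (hI i).subset_ground)
    have hRfin : R.Finite := (hfinU.insert u).subset hRsub
    have hRE : R ⊆ M.E := by
      intro x hx
      rcases mem_insert_iff.1 (hRsub hx) with rfl | hx'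
      · exact hu
      · obtain ⟨i, hi⟩ := mem_iUnion.1 hx'
        exact (hI i).subset_ground hi
    have hnoIns : ∀ x ∈ R, ¬ Ins M I x := fun x hx hins => hreach x hx hins
    have hspan : ∀ i, ∀ x ∈ R, x ∈ M.closure (R ∩ I i) := by
      intro i x hx
      by_cases hxi : x ∈ I i
      · exact M.subset_closure _ ((inter_subset_left).trans hRE) ⟨hx, hxi⟩
      · have hdep : ¬ M.Indep (insert x (I i)) := fun h => hnoIns x hx ⟨i, hxi, h⟩
        have hxE : x ∈ M.E := hRE hx
        have hmem := mem_closure_swapset (hI i) hxE hxi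
          (M.ground_finite.subset (hI i).subset_ground) hdep
        refine M.closure_subset_closure ?_ hmem
        rintro y ⟨hyI, hyind⟩
        exact ⟨hx.tail ⟨i, hxi, hyI, hyind⟩, hyI⟩
    have hrk : ∀ i, mrk M R ≤ (R ∩ I i).ncard := by
      intro i
      apply mrk_le
      intro T hT hTi
      exact ncard_le_of_indep_subset_closure hTi ((hI i).subset inter_subset_right)
        (fun a ha => hspan i a (hT ha))
    have hReq : R = insert u (⋃ i, R ∩ I i) := by
      apply Subset.antisymm
      · intro x hx
        rcases mem_insert_iff.1 (hRsub hx) with rfl | hx'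
        · exact mem_insert _ _
        · obtain ⟨i, hi⟩ := mem_iUnion.1 hx'
          exact mem_insert_of_mem _ (mem_iUnion.2 ⟨i, hx, hi⟩)
      · intro x hx
        rcases mem_insert_iff.1 hx with rfl | hx'
        · exact huR
        · obtain ⟨i, hi⟩ := mem_iUnion.1 hx'
          exact hi.1
    have huRI : u ∉ ⋃ i, R ∩ I i := by
      intro h
      obtain ⟨i, hi⟩ := mem_iUnion.1 h
      exact huU (mem_iUnion.2 ⟨i, hi.2⟩)
    have hcount : R.ncard = (⋃ i, R ∩ I i).ncard + 1 := by
      conv_lhs => rw [hReq]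
      exact Set.ncard_insert_of_notMem huRI
        ((Set.finite_iUnion (fun i => hRfin.subset inter_subset_left)))
    have hsum : (⋃ i, R ∩ I i).ncard = ∑ i, (R ∩ I i).ncard :=
      ncard_iUnion_fin _ (fun i => hRfin.subset inter_subset_left)
        (fun i j hij => ((hdisj i j hij).mono inter_subset_right inter_subset_right))
    refine ⟨R, hRsub, ?_⟩
    have hle : k * mrk M R ≤ ∑ i : Fin k, (R ∩ I i).ncard := by
      calc k * mrk M R = ∑ _i : Fin k, mrk M R := by
            simp [Finset.sum_const, mul_comm]
        _ ≤ ∑ i, (R ∩ I i).ncard := Finset.sum_le_sum (fun i _ => hrk i)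
    rw [hcount, hsum]
    exact Nat.lt_succ_of_le hle

end Stmt10Aux
namespace Stmt10Aux

variable {α : Type*} {M : Matroid α}

lemma cond_of_no_overcrowded [M.Finite] {kk : ℕ} {U : Set α} (hU : U ⊆ M.E)
    (hempty : ∀ S ⊆ U, Overcrowded M kk S → S = ∅) :
    ∀ S ⊆ U, S.ncard ≤ kk * mrk M S := by
  have hUfin : U.Finite := M.ground_finite.subset hU
  have hsubs : {T : Set α | T ⊆ U}.Finite := hUfin.finite_subsets
  obtain ⟨S0, hS0, hmax⟩ := Set.exists_max_image {T : Set α | T ⊆ U}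
    (fun T => (T.ncard : ℤ) - kk * mrk M T) hsubs ⟨∅, empty_subset U⟩
  by_cases hpos : (S0.ncard : ℤ) - kk * mrk M S0 ≤ 0
  · intro S hS
    have h1 := hmax S hS
    have h0 : (S.ncard : ℤ) - kk * mrk M S ≤ 0 := le_trans h1 hpos
    have : (S.ncard : ℤ) ≤ kk * mrk M S := by linarith
    exact_mod_cast this
  · exfalso
    push_neg at hpos
    have hS0U : S0 ⊆ U := hS0
    have hfin0 : S0.Finite := hUfin.subset hS0U
    have hoc : Overcrowded M kk S0 := by
      intro Sp hSp
      have hSpU : Sp ⊆ U := hSp.trans hS0U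
      have h1 := hmax Sp hSpU
      have hdiff : ((S0 \ Sp).ncard : ℤ) = (S0.ncard : ℤ) - Sp.ncard :=
        Set.cast_ncard_sdiff hSp hfin0
      by_cases hle : mrk M S0 ≤ mrk M Sp
      · simp [Nat.sub_eq_zero_of_le hle]
      · push_neg at hle
        have hZ : (kk : ℤ) * ((mrk M S0 : ℤ) - mrk M Sp) ≤ ((S0 \ Sp).ncard : ℤ) := by
          rw [hdiff]; linarith
        zify [hle.le]
        exact hZ
    have he := hempty S0 hS0U hoc
    rw [he] at hpos
    have : mrk M (∅ : Set α) = 0 := mrk_empty M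
    rw [this] at hpos
    simp at hpos

theorem stmt10' {α : Type*} (M : Matroid α) [M.Finite] (k : ℕ) (hk : 0 < k)
    (U : Set α) (hU : U ⊆ M.E)
    (hempty : ∀ S ⊆ U, Overcrowded M k S → S = ∅) :
    ∃ I : Fin k → Set α, (∀ i, M.Indep (I i)) ∧
      (∀ i j, i ≠ j → Disjoint (I i) (I j)) ∧ (⋃ i, I i) = U := by
  classical
  have hcond := cond_of_no_overcrowded hU hempty
  have hUfin : U.Finite := M.ground_finite.subset hU
  suffices H : ∀ n : ℕ, ∀ V : Set α, V ⊆ U → V.ncard ≤ n →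
      ∃ I : Fin k → Set α, (∀ i, M.Indep (I i)) ∧
        (∀ i j, i ≠ j → Disjoint (I i) (I j)) ∧ (⋃ i, I i) = V by
    exact H U.ncard U Subset.rfl le_rfl
  intro n
  induction n with
  | zero =>
    intro V hV hcard
    have hVfin : V.Finite := hUfin.subset hV
    have : V = ∅ := (Set.ncard_eq_zero hVfin).1 (Nat.le_zero.1 hcard)
    exact ⟨fun _ => ∅, fun _ => M.empty_indep, fun _ _ _ => Set.empty_disjoint _, by simp [this]⟩
  | succ n ih =>
    intro V hV hcard
    rcases Set.eq_empty_or_nonempty V with rfl | ⟨u, huV⟩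
    · exact ⟨fun _ => ∅, fun _ => M.empty_indep, fun _ _ _ => Set.empty_disjoint _, by simp⟩
    · have hVfin : V.Finite := hUfin.subset hV
      have hV' : V \ {u} ⊆ U := diff_subset.trans hV
      have hcard' : (V \ {u}).ncard ≤ n := by
        have := Set.ncard_diff_singleton_lt_of_mem huV hVfin
        omega
      obtain ⟨I, h1, h2, h3⟩ := ih (V \ {u}) hV' hcard'
      have huE : u ∈ M.E := hU (hV huV)
      have huU : u ∉ ⋃ i, I i := by rw [h3]; simp
      have hins : insert u (⋃ i, I i) = V := by
        rw [h3, insert_diff_singleton, insert_eq_of_mem huV]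
      rcases aug_or_violation h1 h2 huE huU with ⟨J, hJ1, hJ2, hJ3⟩ | ⟨S, hSsub, hSviol⟩
      · exact ⟨J, hJ1, hJ2, by rw [hJ3, hins]⟩
      · exfalso
        have hSU : S ⊆ U := (hSsub.trans_eq hins).trans hV
        exact absurd (hcond S hSU) (not_le.2 hSviol)

end Stmt10Aux

/-- If `U` has no non-empty `k`-overcrowded subset (empty `k`-deadlock),
then `U` can be partitioned into at most `k` independent sets. -/
theorem stmt10 {α : Type*} (M : Matroid α) [M.Finite] (k : ℕ) (hk : 0 < k)
    (U : Set α) (hU : U ⊆ M.E)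
    (hempty : ∀ S ⊆ U, Overcrowded M k S → S = ∅) :
    ∃ I : Fin k → Set α, (∀ i, M.Indep (I i)) ∧
      (∀ i j, i ≠ j → Disjoint (I i) (I j)) ∧ (⋃ i, I i) = U := by
  exact Stmt10Aux.stmt10' M k hk U hU hempty
end

section
/- Let r ≥ 0 and ℓ > 3^r be integers. Consider a family 𝒯 = {T₁,…,T_m} of disjoint rainbow independent sets in a coloured matroid, and define families 𝒯⁽⁰⁾,…,𝒯⁽ʳ⁾ by 𝒯⁽⁰⁾ = 𝒯 and 𝒯⁽ⁱ⁾ the ℓ-reduction of 𝒯⁽ⁱ⁻¹⁾ for i = 1,…,r. Suppose there is an element e ∉ T₁ ∪ … ∪ T_m of the matroid such that T ∪ {e} is a rainbow independent set for some T ∈ 𝒯⁽ⁱ⁾ for some i ∈ {0,…,r}. Then there exists a family 𝒮 = {S₁,…,S_m} of disjoint rainbow independent sets with S₁ ∪ … ∪ S_m = (T₁ ∪ … ∪ T_m) ∪ {e} and Σ_{j=1}^{m} |S_j \ T_j| ≤ 3^r. -/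
/-!
Induct on `r`, carrying the extra invariant that at most `3^r` of the sets change. Repack the
`ℓ`-reduction `𝒯'` of `𝒯` together with `e` by induction, then give every set back the elements
the reduction removed from it. Each enlarged set is repaired by discarding the elements whose
colour clashes with a newly added one and extending to a basis; this displaces at most twice as
many elements as were added. A displaced element `x` was removed by the reduction, so there are
at least `ℓ > 3^r` sets `T` with `T ∪ {x}` rainbow independent, and at most `3^(r-1)` of them have
changed. Hence the at most `2 · 3^(r-1)` displaced elements can be put greedily into distinct
unchanged sets, for a total cost of `3 · 3^(r-1) = 3^r`.
-/

/-- A rainbow independent set: independent, with pairwise distinct colours. -/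
def RainbowIndep {α κ : Type*} (M : Matroid α) (c : α → κ) (S : Set α) : Prop :=
  M.Indep S ∧ Set.InjOn c S

/-- The `ℓ`-reduction of a family of disjoint rainbow independent sets: delete every
covered element `x` for which there exist `ℓ` different members `T` of the family with
`x ∉ T` such that `T ∪ {x}` is a rainbow independent set. -/
def reduce {α κ : Type*} (M : Matroid α) (c : α → κ) (ℓ : ℕ) {m : ℕ}
    (T : Fin m → Set α) : Fin m → Set α :=
  fun j => {x ∈ T j |
    {i : Fin m | x ∉ T i ∧ RainbowIndep M c (insert x (T i))}.ncard < ℓ}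

open Set Function

section General

variable {α ι κ : Type*}

lemma Set.InjOn.ncard_inter_preimage_image_le {c : α → κ} {D Y : Set α} (hc : InjOn c D)
    (hY : Y.Finite) : (D ∩ c ⁻¹' (c '' Y)).ncard ≤ Y.ncard :=
  calc (D ∩ c ⁻¹' (c '' Y)).ncard ≤ (c '' Y).ncard :=
        ncard_le_ncard_of_injOn c (fun _ hx ↦ hx.2) (hc.mono inter_subset_left) (hY.image c)
    _ ≤ Y.ncard := ncard_image_le hY

lemma Set.InjOn.union_sdiff_preimage_image_s12 {c : α → κ} {S A D : Set α} (hS : InjOn c S)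
    (hA : InjOn c A) (hDA : D ⊆ A) : InjOn c (S ∪ (D \ c ⁻¹' (c '' (S \ A)))) := by
  have hcross : ∀ x ∈ S, ∀ y ∈ D \ c ⁻¹' (c '' (S \ A)), c x = c y → x = y := by
    intro x hx y hy hxy
    by_cases hxA : x ∈ A
    · exact hA hxA (hDA hy.1) hxy
    · exact (hy.2 ⟨x, ⟨hx, hxA⟩, hxy⟩).elim
  rintro x (hx | hx) y (hy | hy) hxy
  · exact hS hx hy hxy
  · exact hcross x hx y hy hxy
  · exact (hcross y hy x hx hxy.symm).symm
  · exact hA (hDA hx.1) (hDA hy.1) hxy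

lemma Set.Finite.exists_injOn_forall_mem [Nonempty ι] {L : Set α} (hL : L.Finite)
    {C : α → Set ι} (hC : ∀ x ∈ L, L.ncard ≤ (C x).ncard) :
    ∃ f : α → ι, InjOn f L ∧ ∀ x ∈ L, f x ∈ C x := by
  induction L, hL using Set.Finite.induction_on with
  | empty => exact ⟨fun _ ↦ Classical.arbitrary ι, injOn_empty _, fun _ h ↦ h.elim⟩
  | @insert a s has hs ih =>
    have hsa : s.ncard + 1 = (insert a s).ncard := (ncard_insert_of_notMem has hs).symm
    obtain ⟨f, hf, hfC⟩ := ih fun x hx ↦ by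
      have := hC x (mem_insert_of_mem a hx); omega
    obtain ⟨k, hkC, hkf⟩ := sdiff_nonempty_of_ncard_lt_ncard (s := f '' s) (t := C a)
      (by have := hC a (mem_insert a s); have := ncard_image_le (f := f) hs; omega) (hs.image f)
    classical
    refine ⟨update f a k, ?_, ?_⟩
    · refine (injOn_insert has).2 ⟨?_, ?_⟩
      · exact hf.congr fun x hx ↦ (update_of_ne (ne_of_mem_of_not_mem hx has) _ _).symm
      · rintro ⟨x, hx, hxa⟩
        rw [update_self, update_of_ne (ne_of_mem_of_not_mem hx has)] at hxa
        exact hkf ⟨x, hx, hxa⟩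
    · rintro x (rfl | hx)
      · simpa using hkC
      · rw [update_of_ne (ne_of_mem_of_not_mem hx has)]; exact hfC x hx

lemma Set.sum_ncard_inter_preimage_singleton [Fintype ι] {L : Set α} (hL : L.Finite)
    (f : α → ι) : ∑ k, (L ∩ f ⁻¹' {k}).ncard = L.ncard := by
  rw [← finsum_eq_sum_of_fintype, ← ncard_iUnion_of_finite (fun _ ↦ hL.inter_of_left _)]
  · rw [← inter_iUnion, ← preimage_iUnion, iUnion_of_singleton, preimage_univ, inter_univ]
  · exact fun a b hab ↦ (disjoint_singleton.2 hab).preimage f |>.mono inter_subset_right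
      inter_subset_right

end General

lemma Matroid.IsBasis.ncard_sdiff_add_ncard_le {α : Type*} {M : Matroid α} {B J U : Set α}
    (hB : M.IsBasis B U) (hU : U.Finite) (hJ : M.Indep J) (hJU : J ⊆ U) :
    (U \ B).ncard + J.ncard ≤ U.ncard := by
  have hJB : J.ncard ≤ B.ncard := by
    have := hJ.encard_le_eRk_of_subset hJU
    rw [← hB.encard_eq_eRk, ← (hU.subset hJU).cast_ncard_eq,
      ← (hU.subset hB.subset).cast_ncard_eq] at this
    exact_mod_cast this
  have := ncard_sdiff_add_ncard_of_subset hB.subset hU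
  omega

section Rainbow

variable {α κ : Type*} {M : Matroid α} {c : α → κ}

lemma RainbowIndep.subset {S T : Set α} (h : RainbowIndep M c S) (hTS : T ⊆ S) :
    RainbowIndep M c T :=
  ⟨h.1.subset hTS, h.2.mono hTS⟩

lemma RainbowIndep.finite [M.RankFinite] {S : Set α} (h : RainbowIndep M c S) : S.Finite :=
  h.1.finite

/-- Drop from `D` the elements whose colour occurs in `S \ A`, then extend `S` to a basis of what
remains. Both steps lose at most `(S \ A).ncard` elements, the second because what remains is
`(S \ A) ∪ J` with `J ⊆ A` independent. -/
lemma RainbowIndep.exists_subset_union_ncard_sdiff_le [M.RankFinite] {S A D : Set α}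
    (hS : RainbowIndep M c S) (hA : RainbowIndep M c A) (hDA : D ⊆ A) :
    ∃ B, S ⊆ B ∧ B ⊆ S ∪ D ∧ RainbowIndep M c B ∧
      ((S ∪ D) \ B).ncard ≤ 2 * (S \ A).ncard := by
  set Y := S \ A
  set D' := D \ c ⁻¹' (c '' Y)
  set J := (S ∩ A) ∪ D'
  have hYfin : Y.Finite := hS.finite.subset sdiff_subset
  have hUfin : (S ∪ D').Finite := hS.finite.union ((hA.finite.subset hDA).subset sdiff_subset)
  have hJA : J ⊆ A := union_subset inter_subset_right (sdiff_subset.trans hDA)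
  have hJU : J ⊆ S ∪ D' := union_subset_union_left _ inter_subset_left
  have hUJY : (S ∪ D').ncard = J.ncard + Y.ncard := by
    rw [← ncard_union_eq ((disjoint_sdiff_right (s := A)).mono_left hJA) (hUfin.subset hJU) hYfin,
      union_right_comm, inter_union_sdiff]
  obtain ⟨B, hB, hSB⟩ := hS.1.subset_isBasis_of_subset subset_union_left
    (union_subset hS.1.subset_ground ((sdiff_subset.trans hDA).trans hA.1.subset_ground))
  have hUB : ((S ∪ D') \ B).ncard + J.ncard ≤ (S ∪ D').ncard :=
    hB.ncard_sdiff_add_ncard_le hUfin (hA.1.subset hJA) hJU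
  have hclash := (hA.2.mono hDA).ncard_inter_preimage_image_le hYfin
  refine ⟨B, hSB, hB.subset.trans (union_subset_union_right _ sdiff_subset),
    ⟨hB.indep, (hS.2.union_sdiff_preimage_image_s12 hA.2 hDA).mono hB.subset⟩, ?_⟩
  have hsub : (S ∪ D) \ B ⊆ (D ∩ c ⁻¹' (c '' Y)) ∪ ((S ∪ D') \ B) := by
    rintro x ⟨hx | hx, hxB⟩
    · exact Or.inr ⟨Or.inl hx, hxB⟩
    · by_cases hxY : x ∈ c ⁻¹' (c '' Y)
      · exact Or.inl ⟨hx, hxY⟩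
      · exact Or.inr ⟨Or.inr ⟨hx, hxY⟩, hxB⟩
  calc ((S ∪ D) \ B).ncard
      ≤ ((D ∩ c ⁻¹' (c '' Y)) ∪ ((S ∪ D') \ B)).ncard :=
        ncard_le_ncard hsub (((hA.finite.subset hDA).inter_of_left _).union hUfin.sdiff)
    _ ≤ (D ∩ c ⁻¹' (c '' Y)).ncard + ((S ∪ D') \ B).ncard := ncard_union_le _ _
    _ ≤ 2 * Y.ncard := by omega

end Rainbow

section Packing

variable {α κ ι : Type*} {M : Matroid α} {c : α → κ}

structure IsRainbowPacking (M : Matroid α) (c : α → κ) (S : ι → Set α) : Prop where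
  rainbowIndep : ∀ k, RainbowIndep M c (S k)
  pairwise_disjoint : Pairwise (Disjoint on S)

lemma IsRainbowPacking.mono {S T : ι → Set α} (hT : IsRainbowPacking M c T)
    (hST : ∀ k, S k ⊆ T k) : IsRainbowPacking M c S :=
  ⟨fun k ↦ (hT.rainbowIndep k).subset (hST k),
    hT.pairwise_disjoint.mono fun _ _ h ↦ h.mono (hST _) (hST _)⟩

/-- Bounding the number of changed sets, and not only the number of added elements, is what
keeps the induction going: unchanged sets are the ones available to absorb displaced elements. -/
structure IsRepacking [Fintype ι] (M : Matroid α) (c : α → κ) (T : ι → Set α) (e : α) (N : ℕ)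
    (S : ι → Set α) : Prop where
  isRainbowPacking : IsRainbowPacking M c S
  iUnion_eq : ⋃ k, S k = (⋃ k, T k) ∪ {e}
  sum_ncard_sdiff_le : ∑ k, (S k \ T k).ncard ≤ N
  ncard_setOf_ne_le : {k | S k ≠ T k}.ncard ≤ N

lemma IsRainbowPacking.exists_extend [Fintype ι] {B : ι → Set α} {L : Set α} {f : α → ι}
    (hB : IsRainbowPacking M c B) (hL : L.Finite) (hLB : Disjoint L (⋃ k, B k))
    (hf : InjOn f L) (hfL : ∀ x ∈ L, RainbowIndep M c (insert x (B (f x)))) (T : ι → Set α) :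
    ∃ S : ι → Set α, IsRainbowPacking M c S ∧ ⋃ k, S k = (⋃ k, B k) ∪ L ∧
      ∑ k, (S k \ T k).ncard ≤ ∑ k, (B k \ T k).ncard + L.ncard ∧
      {k | S k ≠ T k}.ncard ≤ {k | B k ≠ T k}.ncard + L.ncard := by
  have hBL : ∀ k k', Disjoint (B k) (L ∩ f ⁻¹' {k'}) := fun k _ ↦
    (hLB.mono_right (subset_iUnion B k)).symm.mono_right inter_subset_left
  refine ⟨fun k ↦ B k ∪ (L ∩ f ⁻¹' {k}), ⟨fun k ↦ ?_, fun a b hab ↦ ?_⟩, ?_, ?_, ?_⟩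
  · rcases (L ∩ f ⁻¹' {k}).eq_empty_or_nonempty with h | ⟨x, hxL, rfl⟩
    · simpa [h] using hB.rainbowIndep k
    · refine (hfL x hxL).subset (union_subset (subset_insert _ _) ?_)
      rintro y ⟨hyL, hy⟩
      rw [hf hyL hxL hy]
      exact mem_insert _ _
  · refine ((hB.pairwise_disjoint hab).union_right (hBL a b)).union_left
      ((hBL b a).symm.union_right ?_)
    exact ((disjoint_singleton.2 hab).preimage f).mono inter_subset_right inter_subset_right
  · rw [iUnion_union_distrib, ← inter_iUnion, ← preimage_iUnion, iUnion_of_singleton,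
      preimage_univ, inter_univ]
  · calc ∑ k, ((B k ∪ (L ∩ f ⁻¹' {k})) \ T k).ncard
        ≤ ∑ k, ((B k \ T k).ncard + (L ∩ f ⁻¹' {k}).ncard) := by
          refine Finset.sum_le_sum fun k _ ↦ ?_
          rw [union_sdiff_distrib]
          exact (ncard_union_le _ _).trans
            (add_le_add_right (ncard_le_ncard sdiff_subset (hL.inter_of_left _)) _)
      _ = ∑ k, (B k \ T k).ncard + L.ncard := by
          rw [Finset.sum_add_distrib, sum_ncard_inter_preimage_singleton hL]
  · calc {k | B k ∪ (L ∩ f ⁻¹' {k}) ≠ T k}.ncard ≤ ({k | B k ≠ T k} ∪ f '' L).ncard := by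
          refine ncard_le_ncard (fun k hk ↦ ?_) (toFinite _)
          by_contra h
          simp only [mem_union, mem_ofPred_eq, not_or, not_not] at h hk
          rw [← h.1, Ne, union_eq_left] at hk
          exact hk fun x hx ↦ (h.2 ⟨x, hx.1, hx.2⟩).elim
      _ ≤ {k | B k ≠ T k}.ncard + L.ncard :=
          (ncard_union_le _ _).trans (add_le_add_right (ncard_image_le hL) _)

end Packing

section Repair

variable {α κ ι : Type*} [Fintype ι] {M : Matroid α} {c : α → κ}
  {T R S' : ι → Set α} {e : α} {N : ℕ}

lemma IsRepacking.pairwise_disjoint_union_sdiff (hS' : IsRepacking M c R e N S')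
    (hT : IsRainbowPacking M c T) (heT : e ∉ ⋃ k, T k) (hRT : ∀ k, R k ⊆ T k) :
    Pairwise (Disjoint on fun k ↦ S' k ∪ (T k \ R k)) := by
  have hS'D : ∀ a b, Disjoint (S' a) (T b \ R b) := by
    refine fun a b ↦ disjoint_left.2 fun x hxa hxb ↦ ?_
    have hx : x ∈ (⋃ k, R k) ∪ {e} := hS'.iUnion_eq ▸ mem_iUnion_of_mem a hxa
    rcases hx with hx | rfl
    · obtain ⟨k, hxk⟩ := mem_iUnion.1 hx
      obtain rfl : k = b := by
        by_contra hkb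
        exact disjoint_left.1 (hT.pairwise_disjoint hkb) (hRT k hxk) hxb.1
      exact hxb.2 hxk
    · exact heT (mem_iUnion_of_mem b hxb.1)
  intro a b hab
  exact ((hS'.isRainbowPacking.pairwise_disjoint hab).union_right (hS'D a b)).union_left
    ((hS'D b a).symm.union_right ((hT.pairwise_disjoint hab).mono sdiff_subset sdiff_subset))

lemma IsRepacking.iUnion_union_sdiff (hS' : IsRepacking M c R e N S') (hRT : ∀ k, R k ⊆ T k) :
    ⋃ k, (S' k ∪ (T k \ R k)) = (⋃ k, T k) ∪ {e} := by
  rw [iUnion_union_distrib, hS'.iUnion_eq, union_right_comm, ← iUnion_union_distrib]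
  simp only [union_sdiff_cancel (hRT _)]

lemma IsRepacking.exists_repair [M.RankFinite] (hS' : IsRepacking M c R e N S')
    (hT : IsRainbowPacking M c T) (heT : e ∉ ⋃ k, T k) (hRT : ∀ k, R k ⊆ T k) :
    ∃ B : ι → Set α, IsRainbowPacking M c B ∧ ⋃ k, B k ⊆ (⋃ k, T k) ∪ {e} ∧
      ∑ k, (B k \ T k).ncard ≤ N ∧ {k | B k ≠ T k}.ncard ≤ N ∧
      ((⋃ k, T k) ∪ {e}) \ ⋃ k, B k ⊆ ⋃ k, T k \ R k ∧
      (((⋃ k, T k) ∪ {e}) \ ⋃ k, B k).ncard ≤ 2 * N := by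
  choose B hS'B hBA hB hBA_card using fun k ↦
    (hS'.isRainbowPacking.rainbowIndep k).exists_subset_union_ncard_sdiff_le
      (hT.rainbowIndep k) (sdiff_subset (t := R k))
  have hAfin : ∀ k, (S' k ∪ (T k \ R k)).Finite := fun k ↦
    (hS'.isRainbowPacking.rainbowIndep k).finite.union ((hT.rainbowIndep k).finite.sdiff)
  have hS'TR : ∀ k, S' k \ T k ⊆ S' k \ R k := fun k ↦ sdiff_subset_sdiff_right (hRT k)
  have hBTR : ∀ k, B k \ T k ⊆ S' k \ R k := fun k x ⟨hxB, hxT⟩ ↦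
    (hBA k hxB).elim (fun hxS' ↦ hS'TR k ⟨hxS', hxT⟩) fun hxD ↦ (hxT hxD.1).elim
  have hlost : ∀ k, ((S' k ∪ (T k \ R k)) \ B k).ncard ≤ 2 * (S' k \ R k).ncard := fun k ↦
    (hBA_card k).trans (Nat.mul_le_mul_left 2
      (ncard_le_ncard (hS'TR k) ((hS'.isRainbowPacking.rainbowIndep k).finite.sdiff)))
  have hBT : ∀ k, S' k = R k → B k = T k := by
    intro k hk
    have h0 : ((S' k ∪ (T k \ R k)) \ B k).ncard = 0 := by
      simpa only [hk, sdiff_self, ncard_empty, mul_zero, Nat.le_zero] using hlost k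
    rw [ncard_eq_zero (hAfin k).sdiff, sdiff_eq_empty] at h0
    rw [(hBA k).antisymm h0, hk, union_sdiff_cancel (hRT k)]
  have hA := hS'.iUnion_union_sdiff hRT
  have hlost_sub : ((⋃ k, T k) ∪ {e}) \ ⋃ k, B k ⊆ ⋃ k, (S' k ∪ (T k \ R k)) \ B k := by
    rw [← hA]
    rintro x ⟨hxA, hxB⟩
    obtain ⟨k, hxk⟩ := mem_iUnion.1 hxA
    exact mem_iUnion_of_mem k ⟨hxk, fun h ↦ hxB (mem_iUnion_of_mem k h)⟩
  refine ⟨B, ⟨hB, (hS'.pairwise_disjoint_union_sdiff hT heT hRT).mono fun a b h ↦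
    h.mono (hBA a) (hBA b)⟩, hA ▸ iUnion_mono hBA, ?_, ?_, ?_, ?_⟩
  · exact (Finset.sum_le_sum fun k _ ↦ ncard_le_ncard (hBTR k)
      ((hS'.isRainbowPacking.rainbowIndep k).finite.sdiff)).trans hS'.sum_ncard_sdiff_le
  · exact (ncard_le_ncard (fun k hk hS'k ↦ (show B k ≠ T k from hk) (hBT k hS'k)) (toFinite _)).trans
      hS'.ncard_setOf_ne_le
  · refine hlost_sub.trans (iUnion_mono fun k x hx ↦ ?_)
    exact (hx.1.elim (fun hxS' ↦ (hx.2 (hS'B k hxS')).elim) id)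
  · calc (((⋃ k, T k) ∪ {e}) \ ⋃ k, B k).ncard
        ≤ (⋃ k, (S' k ∪ (T k \ R k)) \ B k).ncard :=
          ncard_le_ncard hlost_sub (finite_iUnion fun k ↦ (hAfin k).sdiff)
      _ ≤ ∑ k, ((S' k ∪ (T k \ R k)) \ B k).ncard := ncard_iUnion_le_of_fintype _
      _ ≤ ∑ k, 2 * (S' k \ R k).ncard := Finset.sum_le_sum fun k _ ↦ hlost k
      _ ≤ 2 * N := by rw [← Finset.mul_sum]; exact Nat.mul_le_mul_left 2 hS'.sum_ncard_sdiff_le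
end Repair

lemma IsRainbowPacking.exists_isRepacking {α κ ι : Type*} [Fintype ι] [Nonempty ι]
    {M : Matroid α} {c : α → κ} {B T : ι → Set α} {e : α} {N : ℕ}
    (hB : IsRainbowPacking M c B) (hBX : ⋃ k, B k ⊆ (⋃ k, T k) ∪ {e})
    (hsum : ∑ k, (B k \ T k).ncard ≤ N) (hne : {k | B k ≠ T k}.ncard ≤ N)
    (hLfin : (((⋃ k, T k) ∪ {e}) \ ⋃ k, B k).Finite)
    (hL : (((⋃ k, T k) ∪ {e}) \ ⋃ k, B k).ncard ≤ 2 * N)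
    (hcand : ∀ x ∈ ((⋃ k, T k) ∪ {e}) \ ⋃ k, B k,
      3 * N ≤ {k | x ∉ T k ∧ RainbowIndep M c (insert x (T k))}.ncard) :
    ∃ S, IsRepacking M c T e (3 * N) S := by
  obtain ⟨f, hf, hfC⟩ := hLfin.exists_injOn_forall_mem
    (C := fun x ↦ {k | x ∉ T k ∧ RainbowIndep M c (insert x (T k))} \ {k | B k ≠ T k})
    fun x hx ↦ by
      have := ncard_le_ncard_sdiff_add_ncard
        {k | x ∉ T k ∧ RainbowIndep M c (insert x (T k))} {k | B k ≠ T k}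
      have := hcand x hx
      omega
  have hfL : ∀ x ∈ ((⋃ k, T k) ∪ {e}) \ ⋃ k, B k, RainbowIndep M c (insert x (B (f x))) := by
    intro x hx
    obtain ⟨⟨-, hx_indep⟩, hBT⟩ := hfC x hx
    rwa [show B (f x) = T (f x) from not_not.1 hBT]
  obtain ⟨S, hS, hSU, hSsum, hSne⟩ := hB.exists_extend hLfin disjoint_sdiff_left hf hfL T
  exact ⟨S, ⟨hS, hSU.trans (union_sdiff_cancel hBX), by omega, by omega⟩⟩

lemma IsRainbowPacking.exists_isRepacking_insert {α κ ι : Type*} [Fintype ι] {M : Matroid α}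
    {c : α → κ} {T : ι → Set α} {e : α} {j : ι} (hT : IsRainbowPacking M c T)
    (heT : e ∉ ⋃ k, T k) (hj : RainbowIndep M c (insert e (T j))) :
    ∃ S, IsRepacking M c T e 1 S := by
  obtain ⟨S, hS, hSU, hSsum, hSne⟩ := hT.exists_extend (finite_singleton e)
    (disjoint_singleton_left.2 heT) (injOn_singleton (fun _ ↦ j) e) (by simpa using hj) T
  exact ⟨S, ⟨hS, hSU, by simpa using hSsum, by simpa using hSne⟩⟩

section Reduce

variable {α κ : Type*} {M : Matroid α} {c : α → κ} {ℓ m : ℕ}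

lemma reduce_subset (T : Fin m → Set α) (k : Fin m) : reduce M c ℓ T k ⊆ T k :=
  sep_subset _ _

lemma le_ncard_of_mem_sdiff_reduce {T : Fin m → Set α} {k : Fin m} {x : α}
    (hx : x ∈ T k \ reduce M c ℓ T k) :
    ℓ ≤ {i | x ∉ T i ∧ RainbowIndep M c (insert x (T i))}.ncard :=
  not_lt.1 fun h ↦ hx.2 ⟨hx.1, h⟩

lemma IsRepacking.of_reduce [M.RankFinite] {T S' : Fin m → Set α} {e : α} {N : ℕ}
    (hS' : IsRepacking M c (reduce M c ℓ T) e N S') (hT : IsRainbowPacking M c T)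
    (heT : e ∉ ⋃ k, T k) (hN : 3 * N ≤ ℓ) : ∃ S, IsRepacking M c T e (3 * N) S := by
  have : Nonempty (Fin m) := by
    obtain ⟨k, -⟩ := mem_iUnion.1 (hS'.iUnion_eq ▸ Or.inr rfl : e ∈ ⋃ k, S' k)
    exact ⟨k⟩
  obtain ⟨B, hB, hBX, hsum, hne, hL_sub, hL⟩ := hS'.exists_repair hT heT (reduce_subset T)
  refine hB.exists_isRepacking hBX hsum hne
    (((finite_iUnion fun k ↦ (hT.rainbowIndep k).finite).union (finite_singleton e)).sdiff) hL
    fun x hx ↦ ?_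
  obtain ⟨k, hxk⟩ := mem_iUnion.1 (hL_sub hx)
  exact hN.trans (le_ncard_of_mem_sdiff_reduce hxk)

theorem IsRainbowPacking.exists_isRepacking_of_iterate_reduce [M.RankFinite] {T : Fin m → Set α}
    {e : α} {j : Fin m} (i : ℕ) (hℓ : 3 ^ i ≤ ℓ) (hT : IsRainbowPacking M c T)
    (heT : e ∉ ⋃ k, T k) (hj : RainbowIndep M c (insert e ((reduce M c ℓ)^[i] T j))) :
    ∃ S, IsRepacking M c T e (3 ^ i) S := by
  induction i generalizing T with
  | zero => simpa using hT.exists_isRepacking_insert heT hj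
  | succ i ih =>
    rw [iterate_succ_apply] at hj
    obtain ⟨S', hS'⟩ := ih ((pow_le_pow_right₀ (by norm_num) i.le_succ).trans hℓ)
      (hT.mono (reduce_subset T)) (fun h ↦ heT (iUnion_mono (reduce_subset T) h)) hj
    rw [pow_succ'] at hℓ ⊢
    exact hS'.of_reduce hT heT hℓ

end Reduce

lemma apply_eq_iterate_of_le {β : Type*} {f : β → β} {u : ℕ → β} {x : β} {r n : ℕ}
    (h0 : u 0 = x) (hsucc : ∀ i < r, u (i + 1) = f (u i)) (hn : n ≤ r) : u n = f^[n] x := by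
  induction n with
  | zero => exact h0
  | succ n ih => rw [hsucc n hn, ih (Nat.le_of_succ_le hn), iterate_succ_apply']

theorem stmt12_general {α κ : Type*} (M : Matroid α) [M.Finite] (c : α → κ)
    (r ℓ m : ℕ) (hℓ : 3 ^ r < ℓ)
    (T : Fin m → Set α)
    (hTri : ∀ j, RainbowIndep M c (T j))
    (hTdisj : ∀ i j, i ≠ j → Disjoint (T i) (T j))
    (TT : ℕ → Fin m → Set α)
    (hTT0 : TT 0 = T)
    (hTTsucc : ∀ i < r, TT (i + 1) = reduce M c ℓ (TT i))
    (e : α) (heT : e ∉ ⋃ j, T j)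
    (hgood : ∃ i ≤ r, ∃ j, RainbowIndep M c (insert e (TT i j))) :
    ∃ S : Fin m → Set α, (∀ j, RainbowIndep M c (S j)) ∧
      (∀ i j, i ≠ j → Disjoint (S i) (S j)) ∧
      (⋃ j, S j) = (⋃ j, T j) ∪ {e} ∧
      ∑ j, (S j \ T j).ncard ≤ 3 ^ r := by
  obtain ⟨i, hir, j, hj⟩ := hgood
  rw [apply_eq_iterate_of_le hTT0 hTTsucc hir] at hj
  have h3 : 3 ^ i ≤ 3 ^ r := pow_le_pow_right₀ (by norm_num) hir
  obtain ⟨S, hS⟩ := IsRainbowPacking.exists_isRepacking_of_iterate_reduce i (h3.trans hℓ.le)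
    ⟨hTri, hTdisj⟩ heT hj
  exact ⟨S, hS.isRainbowPacking.rainbowIndep, hS.isRainbowPacking.pairwise_disjoint, hS.iUnion_eq,
    hS.sum_ncard_sdiff_le.trans h3⟩

/-- Let `r ≥ 0` and `ℓ > 3^r`. Given a family `T₁, …, T_m` of disjoint
rainbow independent sets and iterated `ℓ`-reductions `𝒯⁽⁰⁾ = 𝒯`, `𝒯⁽ⁱ⁾ = reduce 𝒯⁽ⁱ⁻¹⁾`,
if some uncovered element `e` can be added to a member of some `𝒯⁽ⁱ⁾` (`i ≤ r`) keeping
rainbow independence, then there is a family `S₁, …, S_m` of disjoint rainbow independent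
sets covering exactly `(T₁ ∪ … ∪ T_m) ∪ {e}` with `∑ⱼ |Sⱼ \ Tⱼ| ≤ 3^r`. -/
theorem stmt12 {α κ : Type*} (M : Matroid α) [M.Finite] (c : α → κ)
    (r ℓ m : ℕ) (hℓ : 3 ^ r < ℓ)
    (T : Fin m → Set α)
    (hTri : ∀ j, RainbowIndep M c (T j))
    (hTdisj : ∀ i j, i ≠ j → Disjoint (T i) (T j))
    (TT : ℕ → Fin m → Set α)
    (hTT0 : TT 0 = T)
    (hTTsucc : ∀ i < r, TT (i + 1) = reduce M c ℓ (TT i))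
    (e : α) (he : e ∈ M.E) (heT : e ∉ ⋃ j, T j)
    (hgood : ∃ i ≤ r, ∃ j, RainbowIndep M c (insert e (TT i j))) :
    ∃ S : Fin m → Set α, (∀ j, RainbowIndep M c (S j)) ∧
      (∀ i j, i ≠ j → Disjoint (S i) (S j)) ∧
      (⋃ j, S j) = (⋃ j, T j) ∪ {e} ∧
      ∑ j, (S j \ T j).ncard ≤ 3 ^ r :=
  stmt12_general M c r ℓ m hℓ T hTri hTdisj TT hTT0 hTTsucc e heT hgood
end

section
/- For any 0 < η < 1 and γ, ε' > 0 with (ε')²·η > 2γ, consider a coloured rank-n matroid with colour classes B₁,…,B_n (each a basis) and a subset R ⊆ B₁ ∪ … ∪ B_n satisfying: for every independent set T ⊆ B₁ ∪ … ∪ B_n and every colour subset C ⊆ [n], there are at least η·(n−|T|)·|C| − γn² elements e ∈ ⋃_{c∈C}(B_c ∩ R) such that T ∪ {e} is independent. Then for any subset Q ⊆ R with |Q| ≥ |R| − γn² and any colour set C ⊆ [n] with |C| ≥ ε'·n, we have rk(⋃_{c∈C}(B_c ∩ Q)) ≥ (1−ε')·n. -/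
theorem ncard_le_mrk_of_indep {α : Type*} {M : Matroid α} [M.Finite] {I X : Set α}
    (hI : M.Indep I) (hIX : I ⊆ X) : I.ncard ≤ mrk M X := by
  refine le_csSup ⟨M.E.ncard, ?_⟩ ⟨I, hIX, hI, rfl⟩
  rintro _ ⟨J, -, hJ, rfl⟩
  exact Set.ncard_le_ncard hJ.subset_ground M.ground_finite

theorem Matroid.IsBasis'.notMem_of_insert_indep {α : Type*} {M : Matroid α} {T X : Set α}
    {e : α} (hT : M.IsBasis' T X) (heT : e ∉ T) (hindep : M.Indep (insert e T)) : e ∉ X :=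
  fun heX ↦ heT (hT.mem_of_insert_indep heX hindep)

theorem stmt13_general {α : Type*} (M : Matroid α) [M.Finite] (n : ℕ)
    (B : Fin n → Set α)
    (η γ ε' : ℝ) (hη0 : 0 < η) (hε' : 0 < ε')
    (hineq : 2 * γ < ε' ^ 2 * η)
    (R : Set α) (hR : R ⊆ M.E)
    (hspade : ∀ T : Set α, M.Indep T → ∀ C : Set (Fin n),
      η * ((n : ℝ) - T.ncard) * C.ncard - γ * (n : ℝ) ^ 2 ≤
        ({e ∈ ⋃ c ∈ C, B c ∩ R | e ∉ T ∧ M.Indep (insert e T)}.ncard : ℝ)) :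
    ∀ Q ⊆ R, (R.ncard : ℝ) - γ * (n : ℝ) ^ 2 ≤ Q.ncard →
      ∀ C : Set (Fin n), ε' * n ≤ C.ncard →
        (1 - ε') * n ≤ (mrk M (⋃ c ∈ C, B c ∩ Q) : ℝ) := by
  intro Q hQR hQcard C hC
  have hRfin : R.Finite := M.ground_finite.subset hR
  obtain ⟨T, hT⟩ := M.exists_isBasis' (⋃ c ∈ C, B c ∩ Q)
  rcases n.eq_zero_or_pos with rfl | hn
  · simp
  by_contra! hrk
  have hTrk : (T.ncard : ℝ) ≤ mrk M (⋃ c ∈ C, B c ∩ Q) :=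
    mod_cast ncard_le_mrk_of_indep hT.indep hT.subset
  have hext : {e ∈ ⋃ c ∈ C, B c ∩ R | e ∉ T ∧ M.Indep (insert e T)} ⊆ R \ Q := by
    rintro e ⟨he, heT, hindep⟩
    obtain ⟨c, heB, hc, heR⟩ : ∃ c, e ∈ B c ∧ c ∈ C ∧ e ∈ R := by simpa using he
    exact ⟨heR, fun heQ ↦ hT.notMem_of_insert_indep heT hindep (Set.mem_biUnion hc ⟨heB, heQ⟩)⟩
  have hRQ : ((R \ Q).ncard : ℝ) ≤ γ * n ^ 2 := by
    rw [Set.ncard_sdiff hQR (hRfin.subset hQR), Nat.cast_sub (Set.ncard_le_ncard hQR hRfin)]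
    linarith
  have hextcard := (Nat.cast_le (α := ℝ)).2 (Set.ncard_le_ncard hext hRfin.sdiff)
  have hεn : 0 < ε' * n := by positivity
  have hTsmall : ε' * n < n - T.ncard := by linarith
  nlinarith [hspade T hT.indep C, mul_le_mul_of_nonneg_left hC hη0.le,
    mul_lt_mul_of_pos_right hTsmall hεn]

/-- In a coloured rank-`n` matroid whose colour classes `B₁, …, B_n` are
bases, suppose `R` satisfies: for every independent `T` and colour set `C`, at least
`η(n−|T|)|C| − γn²` elements `e ∈ ⋃_{c∈C}(B_c ∩ R)` can be added to `T` keeping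
independence. If `(ε')²η > 2γ`, then for every `Q ⊆ R` with `|Q| ≥ |R| − γn²` and every
colour set `C` with `|C| ≥ ε'n`, we have `rk(⋃_{c∈C}(B_c ∩ Q)) ≥ (1−ε')n`. -/
theorem stmt13 {α : Type*} (M : Matroid α) [M.Finite] (n : ℕ)
    (B : Fin n → Set α) (hB : ∀ c, M.IsBase (B c))
    (hground : M.E = ⋃ c, B c)
    (hBdisj : ∀ c c', c ≠ c' → Disjoint (B c) (B c'))
    (η γ ε' : ℝ) (hη0 : 0 < η) (hη1 : η < 1) (hγ : 0 < γ) (hε' : 0 < ε')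
    (hineq : 2 * γ < ε' ^ 2 * η)
    (R : Set α) (hR : R ⊆ M.E)
    (hspade : ∀ T : Set α, M.Indep T → ∀ C : Set (Fin n),
      η * ((n : ℝ) - T.ncard) * C.ncard - γ * (n : ℝ) ^ 2 ≤
        ({e ∈ ⋃ c ∈ C, B c ∩ R | e ∉ T ∧ M.Indep (insert e T)}.ncard : ℝ)) :
    ∀ Q ⊆ R, (R.ncard : ℝ) - γ * (n : ℝ) ^ 2 ≤ Q.ncard →
      ∀ C : Set (Fin n), ε' * n ≤ C.ncard →
        (1 - ε') * n ≤ (mrk M (⋃ c ∈ C, B c ∩ Q) : ℝ) :=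
  stmt13_general M n B η γ ε' hη0 hε' hineq R hR hspade
end
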